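/- arXiv:1905.08440 — 6 statements merged into one kernel-verified Lean document; each statement's English description precedes it below -/
import Mathlib

section
/- Let a, b, c ∈ ℝ, let U ⊆ ℝ³×ℝ be open, and let u : U → ℝ³, Q : U → 𝒮₀ be smooth maps satisfying the co-rotational Q-tensor equation ∂_tQ + u·∇Q − ωQ + Qω = ΔQ − f_LdG(Q) on U, where ω := (∇u − (∇u)ᵀ)/2. Then pointwise on U: ∂_t tr(Q²) + u·∇ tr(Q²) = Δ tr(Q²) − 2|∇Q|² − 2( a tr(Q²) − b tr(Q³) + c (tr(Q²))² ), where |∇Q|² := ∑_α ∂_αQ:∂_αQ and Δ, ∇ act in the space variable. -/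
/-!
Since `Q` is symmetric, `tr(Q²) = ∑ Q_{αβ}²`. For the advection–diffusion operator
`L = ∂_t + u·∇ − Δ` the Leibniz rule gives `L(f²) = 2 f Lf − 2|∇f|²`, so by the equation
`L tr(Q²) = 2 Q:(ωQ − Qω − f_LdG(Q)) − 2|∇Q|²`. The rotation term vanishes because
`Q:(ωQ − Qω) = tr(QωQ) − tr(Q²ω) = 0` by cyclicity of the trace, and
`Q:f_LdG(Q) = a tr Q² − b tr Q³ + c (tr Q²)²` because `Q:I = tr Q = 0`.
-/

noncomputable section
open Matrix

/-- Euclidean 3-space. -/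
abbrev E3 : Type := EuclideanSpace ℝ (Fin 3)
/-- Real 3×3 matrices. -/
abbrev M3 : Type := Matrix (Fin 3) (Fin 3) ℝ

/-- Spatial partial derivative `∂_α f` of a scalar function on `ℝ³ × ℝ`. -/
def pdx (α : Fin 3) (f : E3 × ℝ → ℝ) (p : E3 × ℝ) : ℝ :=
  fderiv ℝ (fun y => f (y, p.2)) p.1 (EuclideanSpace.single α 1)

/-- Time derivative `∂_t f` of a scalar function on `ℝ³ × ℝ`. -/
def pdt (f : E3 × ℝ → ℝ) (p : E3 × ℝ) : ℝ := deriv (fun s => f (p.1, s)) p.2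

/-- Spatial Laplacian `Δf` of a scalar function on `ℝ³ × ℝ`. -/
def lapx (f : E3 × ℝ → ℝ) (p : E3 × ℝ) : ℝ := ∑ α, pdx α (fun q => pdx α f q) p

/-- The Landau–De Gennes bulk force
`f_LdG(Q) = aQ − b(Q² − (tr(Q²)/3)I₃) + c·tr(Q²)·Q`. -/
def fLdG (a b c : ℝ) (Q : M3) : M3 :=
  a • Q - b • (Q * Q - ((Q * Q).trace / 3) • (1 : M3)) + (c * (Q * Q).trace) • Q

/-- Vorticity `ω = (∇u − (∇u)ᵀ)/2`, with `(∇u)_{αβ} = ∂_β u_α`. -/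
def omg (u : E3 × ℝ → Fin 3 → ℝ) (p : E3 × ℝ) (α β : Fin 3) : ℝ :=
  (pdx β (fun q => u q α) p - pdx α (fun q => u q β) p) / 2

open Filter Topology

section PartialDerivatives

variable {f g : E3 × ℝ → ℝ} {p : E3 × ℝ} {γ : Fin 3}

lemma DifferentiableAt.comp_space_slice (hf : DifferentiableAt ℝ f p) :
    DifferentiableAt ℝ (fun y => f (y, p.2)) p.1 :=
  hf.comp p.1 (differentiableAt_id.prodMk (differentiableAt_const _))

lemma DifferentiableAt.comp_time_slice (hf : DifferentiableAt ℝ f p) :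
    DifferentiableAt ℝ (fun s => f (p.1, s)) p.2 :=
  hf.comp p.2 ((differentiableAt_const _).prodMk differentiableAt_id)

lemma pdx_eq_fderiv (hf : DifferentiableAt ℝ f p) :
    pdx γ f p = fderiv ℝ f p (EuclideanSpace.single γ 1, 0) := by
  have h : HasFDerivAt (fun y => f (y, p.2)) ((fderiv ℝ f p).comp (.inl ℝ E3 ℝ)) p.1 :=
    hf.hasFDerivAt.comp p.1 (hasFDerivAt_prodMk_left p.1 p.2)
  simp [pdx, h.fderiv]

lemma pdx_congr (h : f =ᶠ[𝓝 p] g) : pdx γ f p = pdx γ g p := by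
  have h' : (fun y => f (y, p.2)) =ᶠ[𝓝 p.1] fun y => g (y, p.2) :=
    (continuous_id.prodMk continuous_const).continuousAt.eventually h
  simp only [pdx, h'.fderiv_eq]

lemma pdt_congr (h : f =ᶠ[𝓝 p] g) : pdt f p = pdt g p := by
  have h' : (fun s => f (p.1, s)) =ᶠ[𝓝 p.2] fun s => g (p.1, s) :=
    (continuous_const.prodMk continuous_id).continuousAt.eventually h
  simp only [pdt, h'.deriv_eq]

lemma lapx_congr (h : f =ᶠ[𝓝 p] g) : lapx f p = lapx g p :=
  Finset.sum_congr rfl fun _ _ => pdx_congr (h.eventuallyEq_nhds.mono fun _ => pdx_congr)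

lemma pdx_mul (hf : DifferentiableAt ℝ f p) (hg : DifferentiableAt ℝ g p) :
    pdx γ (fun q => f q * g q) p = pdx γ f p * g p + f p * pdx γ g p := by
  simp [pdx, fderiv_fun_mul hf.comp_space_slice hg.comp_space_slice]
  ring

lemma pdt_mul (hf : DifferentiableAt ℝ f p) (hg : DifferentiableAt ℝ g p) :
    pdt (fun q => f q * g q) p = pdt f p * g p + f p * pdt g p :=
  deriv_fun_mul hf.comp_time_slice hg.comp_time_slice

lemma pdx_sq (hf : DifferentiableAt ℝ f p) :
    pdx γ (fun q => f q ^ 2) p = 2 * f p * pdx γ f p := by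
  simp only [sq, pdx_mul hf hf]
  ring

lemma pdt_sq (hf : DifferentiableAt ℝ f p) :
    pdt (fun q => f q ^ 2) p = 2 * f p * pdt f p := by
  simp only [sq, pdt_mul hf hf]
  ring

lemma pdx_sum {ι : Type*} {s : Finset ι} {F : ι → E3 × ℝ → ℝ}
    (hF : ∀ i ∈ s, DifferentiableAt ℝ (F i) p) :
    pdx γ (fun q => ∑ i ∈ s, F i q) p = ∑ i ∈ s, pdx γ (F i) p := by
  simp [pdx, fderiv_fun_sum fun i hi => (hF i hi).comp_space_slice]

lemma pdt_sum {ι : Type*} {s : Finset ι} {F : ι → E3 × ℝ → ℝ}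
    (hF : ∀ i ∈ s, DifferentiableAt ℝ (F i) p) :
    pdt (fun q => ∑ i ∈ s, F i q) p = ∑ i ∈ s, pdt (F i) p :=
  deriv_fun_sum fun i hi => (hF i hi).comp_time_slice

end PartialDerivatives

section SmoothOnOpen

variable {U : Set (E3 × ℝ)} {f : E3 × ℝ → ℝ} {p : E3 × ℝ}

lemma ContDiffOn.contDiffOn_pdx {m n : WithTop ℕ∞} (hU : IsOpen U) (hf : ContDiffOn ℝ n f U)
    (hmn : m + 1 ≤ n) (γ : Fin 3) : ContDiffOn ℝ m (pdx γ f) U := by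
  refine ((hf.fderiv_of_isOpen hU hmn).clm_apply
    (contDiffOn_const (c := ((EuclideanSpace.single γ 1 : E3), (0 : ℝ))))).congr fun q hq => ?_
  have hn : n ≠ 0 := (zero_lt_one.trans_le (le_add_self.trans hmn)).ne'
  exact pdx_eq_fderiv ((hf.differentiableOn hn).differentiableAt (hU.mem_nhds hq))

lemma lapx_sq (hU : IsOpen U) (hp : p ∈ U) (hf : ContDiffOn ℝ 2 f U) :
    lapx (fun q => f q ^ 2) p = 2 * f p * lapx f p + 2 * ∑ γ, pdx γ f p ^ 2 := by
  have hdiff : ∀ q ∈ U, DifferentiableAt ℝ f q := fun q hq =>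
    (hf.differentiableOn (by norm_num)).differentiableAt (hU.mem_nhds hq)
  have hdiff_pdx (γ : Fin 3) : DifferentiableAt ℝ (pdx γ f) p :=
    ((hf.contDiffOn_pdx (m := 1) hU (by norm_num) γ).differentiableOn
      one_ne_zero).differentiableAt (hU.mem_nhds hp)
  have hfirst (γ : Fin 3) : pdx γ (fun q => f q ^ 2) =ᶠ[𝓝 p] fun q => 2 * f q * pdx γ f q :=
    eventually_of_mem (hU.mem_nhds hp) fun q hq => pdx_sq (hdiff q hq)
  simp only [lapx, pdx_congr (hfirst _), Finset.mul_sum, ← Finset.sum_add_distrib]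
  refine Finset.sum_congr rfl fun γ _ => ?_
  rw [pdx_mul ((hdiff p hp).const_mul 2) (hdiff_pdx γ), pdx_mul (differentiableAt_const _)
    (hdiff p hp)]
  simp only [pdx, fderiv_const_apply, _root_.zero_apply]
  ring

lemma lapx_sum {ι : Type*} {s : Finset ι} {F : ι → E3 × ℝ → ℝ} (hU : IsOpen U) (hp : p ∈ U)
    (hF : ∀ i ∈ s, ContDiffOn ℝ 2 (F i) U) :
    lapx (fun q => ∑ i ∈ s, F i q) p = ∑ i ∈ s, lapx (F i) p := by
  have hfirst (γ : Fin 3) :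
      pdx γ (fun q => ∑ i ∈ s, F i q) =ᶠ[𝓝 p] fun q => ∑ i ∈ s, pdx γ (F i) q :=
    eventually_of_mem (hU.mem_nhds hp) fun q hq => pdx_sum fun i hi =>
      ((hF i hi).differentiableOn two_ne_zero).differentiableAt (hU.mem_nhds hq)
  simp only [lapx, pdx_congr (hfirst _)]
  rw [Finset.sum_comm]
  refine Finset.sum_congr rfl fun γ _ => pdx_sum fun i hi => ?_
  exact (((hF i hi).contDiffOn_pdx (m := 1) hU (by norm_num) γ).differentiableOn
    one_ne_zero).differentiableAt (hU.mem_nhds hp)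

end SmoothOnOpen

lemma advectionDiffusion_sum_sq {ι : Type*} {s : Finset ι} {F : ι → E3 × ℝ → ℝ}
    {U : Set (E3 × ℝ)} {p : E3 × ℝ} (hU : IsOpen U) (hp : p ∈ U)
    (hF : ∀ i ∈ s, ContDiffOn ℝ 2 (F i) U) (v : Fin 3 → ℝ) :
    pdt (fun q => ∑ i ∈ s, F i q ^ 2) p + ∑ γ, v γ * pdx γ (fun q => ∑ i ∈ s, F i q ^ 2) p
      = lapx (fun q => ∑ i ∈ s, F i q ^ 2) p - 2 * ∑ i ∈ s, ∑ γ, pdx γ (F i) p ^ 2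
        + 2 * ∑ i ∈ s, F i p * (pdt (F i) p + ∑ γ, v γ * pdx γ (F i) p - lapx (F i) p) := by
  have hdiff : ∀ i ∈ s, DifferentiableAt ℝ (F i) p := fun i hi =>
    ((hF i hi).differentiableOn two_ne_zero).differentiableAt (hU.mem_nhds hp)
  have hdiff_sq : ∀ i ∈ s, DifferentiableAt ℝ (fun q => F i q ^ 2) p := fun i hi =>
    (hdiff i hi).pow 2
  rw [pdt_sum hdiff_sq, lapx_sum hU hp fun i hi => (hF i hi).pow 2]
  simp only [pdx_sum hdiff_sq]
  rw [Finset.sum_congr rfl fun i hi => pdt_sq (hdiff i hi),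
    Finset.sum_congr rfl fun i hi => lapx_sq hU hp (hF i hi)]
  simp only [Finset.sum_congr rfl fun i hi => pdx_sq (γ := _) (hdiff i hi)]
  simp only [Finset.mul_sum, Finset.sum_add_distrib, Finset.sum_sub_distrib, mul_add, mul_sub]
  rw [Finset.sum_comm (s := Finset.univ)]
  simp only [mul_left_comm (v _), mul_assoc]
  ring

lemma Matrix.IsSymm.sum_mul_apply_eq_trace_mul {n R : Type*} [Fintype n] [CommSemiring R]
    {A : Matrix n n R} (hA : A.IsSymm) (B : Matrix n n R) :
    ∑ i, ∑ j, A i j * B i j = (A * B).trace := by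
  conv_rhs => rw [← hA.eq]
  simp only [trace, diag, mul_apply, transpose_apply]
  exact Finset.sum_comm

lemma Matrix.trace_mul_commutator_self {n R : Type*} [Fintype n] [CommRing R]
    (A B : Matrix n n R) : (A * (B * A - A * B)).trace = 0 := by
  rw [Matrix.mul_sub, trace_sub, trace_mul_cycle', sub_self]

lemma trace_mul_fLdG (a b c : ℝ) {Q : M3} (hQ : Q.trace = 0) :
    (Q * fLdG a b c Q).trace
      = a * (Q * Q).trace - b * (Q * Q * Q).trace + c * (Q * Q).trace ^ 2 := by
  simp only [fLdG, Matrix.mul_add, Matrix.mul_sub, Matrix.mul_smul, Matrix.mul_one, trace_add,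
    trace_sub, trace_smul, hQ, Matrix.mul_assoc, smul_eq_mul]
  ring

theorem statement_4_general (a b c : ℝ) (U : Set (E3 × ℝ)) (hU : IsOpen U)
    (u : E3 × ℝ → Fin 3 → ℝ) (Q : E3 × ℝ → M3)
    (hQ : ∀ γ δ : Fin 3, ContDiffOn ℝ (⊤ : ℕ∞) (fun p => Q p γ δ) U)
    (hQsym : ∀ p ∈ U, (Q p).IsSymm) (hQtr : ∀ p ∈ U, (Q p).trace = 0)
    (heq : ∀ p ∈ U, ∀ α β : Fin 3,
      pdt (fun q => Q q α β) p + (∑ γ, u p γ * pdx γ (fun q => Q q α β) p)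
          - (∑ γ, omg u p α γ * Q p γ β) + (∑ γ, Q p α γ * omg u p γ β)
        = lapx (fun q => Q q α β) p - fLdG a b c (Q p) α β) :
    ∀ p ∈ U,
      pdt (fun q => (Q q * Q q).trace) p
          + (∑ γ, u p γ * pdx γ (fun q => (Q q * Q q).trace) p)
        = lapx (fun q => (Q q * Q q).trace) p
          - 2 * (∑ α, ∑ γ, ∑ δ, (pdx α (fun q => Q q γ δ) p) ^ 2)
          - 2 * (a * (Q p * Q p).trace - b * (Q p * Q p * Q p).trace
              + c * ((Q p * Q p).trace) ^ 2) := by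
  intro p hp
  set ω : M3 := Matrix.of (omg u p)
  have hQ2 (x : Fin 3 × Fin 3) : ContDiffOn ℝ 2 (fun q => Q q x.1 x.2) U :=
    (hQ x.1 x.2).of_le (by norm_cast)
  have htrace :
      (fun q => (Q q * Q q).trace) =ᶠ[𝓝 p] fun q => ∑ x : Fin 3 × Fin 3, Q q x.1 x.2 ^ 2 :=
    eventually_of_mem (hU.mem_nhds hp) fun q hq => by
      simp only [Fintype.sum_prod_type, sq, (hQsym q hq).sum_mul_apply_eq_trace_mul]
  have hPDE (α β : Fin 3) :
      pdt (fun q => Q q α β) p + ∑ γ, u p γ * pdx γ (fun q => Q q α β) p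
          - lapx (fun q => Q q α β) p
        = (ω * Q p - Q p * ω - fLdG a b c (Q p)) α β := by
    simp only [Matrix.sub_apply, mul_apply, ω, of_apply]
    linarith [heq p hp α β]
  rw [pdt_congr htrace, lapx_congr htrace]
  simp only [pdx_congr htrace]
  rw [advectionDiffusion_sum_sq hU hp (fun x _ => hQ2 x) (u p)]
  simp only [Fintype.sum_prod_type, hPDE]
  rw [(hQsym p hp).sum_mul_apply_eq_trace_mul, Matrix.mul_sub, trace_sub,
    trace_mul_commutator_self, trace_mul_fLdG a b c (hQtr p hp)]
  have hgrad : ∑ γ, ∑ δ, ∑ α, pdx α (fun q => Q q γ δ) p ^ 2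
      = ∑ α, ∑ γ, ∑ δ, pdx α (fun q => Q q γ δ) p ^ 2 :=
    (Finset.sum_congr rfl fun _ _ => Finset.sum_comm).trans Finset.sum_comm
  rw [hgrad]
  ring

/-- For smooth `u, Q` on an open `U ⊆ ℝ³×ℝ` with `Q` valued in symmetric
traceless matrices and solving the co-rotational Q-tensor equation, one has pointwise on `U`:
`∂_t tr(Q²) + u·∇ tr(Q²) = Δ tr(Q²) − 2|∇Q|² − 2(a tr(Q²) − b tr(Q³) + c (tr(Q²))²)`. -/
theorem statement_4 (a b c : ℝ) (U : Set (E3 × ℝ)) (hU : IsOpen U)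
    (u : E3 × ℝ → Fin 3 → ℝ) (Q : E3 × ℝ → M3)
    (hu : ∀ i, ContDiffOn ℝ (⊤ : ℕ∞) (fun p => u p i) U)
    (hQ : ∀ γ δ : Fin 3, ContDiffOn ℝ (⊤ : ℕ∞) (fun p => Q p γ δ) U)
    (hQsym : ∀ p ∈ U, (Q p).IsSymm) (hQtr : ∀ p ∈ U, (Q p).trace = 0)
    (heq : ∀ p ∈ U, ∀ α β : Fin 3,
      pdt (fun q => Q q α β) p + (∑ γ, u p γ * pdx γ (fun q => Q q α β) p)
          - (∑ γ, omg u p α γ * Q p γ β) + (∑ γ, Q p α γ * omg u p γ β)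
        = lapx (fun q => Q q α β) p - fLdG a b c (Q p) α β) :
    ∀ p ∈ U,
      pdt (fun q => (Q q * Q q).trace) p
          + (∑ γ, u p γ * pdx γ (fun q => (Q q * Q q).trace) p)
        = lapx (fun q => (Q q * Q q).trace) p
          - 2 * (∑ α, ∑ γ, ∑ δ, (pdx α (fun q => Q q γ δ) p) ^ 2)
          - 2 * (a * (Q p * Q p).trace - b * (Q p * Q p * Q p).trace
              + c * ((Q p * Q p).trace) ^ 2) :=
  statement_4_general a b c U hU u Q hQ hQsym hQtr heq
end
end

section
/- For all a, b ∈ ℝ, all c > 0, and every Q ∈ 𝒮₀: a·tr(Q²) − b·tr(Q³) + c·(tr(Q²))² ≥ (c/2)·tr(Q²)·( tr(Q²) − (b²/c² − 2a/c) ). (This is the algebraic inequality at the heart of the maximum principle Lemma 4.1.) -/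
noncomputable section
open Matrix

/-- For `a, b ∈ ℝ`, `c > 0` and every symmetric traceless `Q`,
`a·tr(Q²) − b·tr(Q³) + c·(tr(Q²))² ≥ (c/2)·tr(Q²)·(tr(Q²) − (b²/c² − 2a/c))`. -/
theorem statement_5 (a b c : ℝ) (hc : 0 < c) (Q : M3)
    (hQsym : Q.IsSymm) (hQtr : Q.trace = 0) :
    c / 2 * (Q * Q).trace * ((Q * Q).trace - (b ^ 2 / c ^ 2 - 2 * a / c)) ≤
      a * (Q * Q).trace - b * (Q * Q * Q).trace + c * ((Q * Q).trace) ^ 2 := by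
  have hsym : ∀ i j, Q j i = Q i j := fun i j => hQsym.apply i j
  set p : ℝ := ∑ i, ∑ j, (Q i j) ^ 2 with hp_def
  set q : ℝ := ∑ i, ∑ j, ((Q * Q) i j) * Q i j with hq_def
  have htr2 : (Q * Q).trace = p := by
    simp only [Matrix.trace, Matrix.diag, Matrix.mul_apply, hp_def]
    refine Finset.sum_congr rfl fun i _ => Finset.sum_congr rfl fun j _ => ?_
    rw [hsym i j]; ring
  have htr3 : (Q * Q * Q).trace = q := by
    simp only [Matrix.trace, Matrix.diag, Matrix.mul_apply, hq_def]
    refine Finset.sum_congr rfl fun i _ => ?_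
    simp only [Matrix.mul_apply, Finset.sum_mul]
    refine Finset.sum_congr rfl fun j _ => ?_
    rw [hsym i j]
  have hp : 0 ≤ p := Finset.sum_nonneg fun i _ =>
    Finset.sum_nonneg fun j _ => sq_nonneg _
  set s : ℝ := ∑ i, ∑ j, ((Q * Q) i j) ^ 2 with hs_def
  have hs : 0 ≤ s := Finset.sum_nonneg fun i _ =>
    Finset.sum_nonneg fun j _ => sq_nonneg _
  -- Cauchy-Schwarz: q^2 ≤ s * p
  have hqs : q ^ 2 ≤ s * p := by
    have := Finset.sum_mul_sq_le_sq_mul_sq (Finset.univ : Finset (Fin 3 × Fin 3))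
      (fun ij => (Q * Q) ij.1 ij.2) (fun ij => Q ij.1 ij.2)
    simpa [← Finset.sum_product', hq_def, hs_def, hp_def] using this
  -- entrywise Cauchy-Schwarz: s ≤ p^2
  have hsp : s ≤ p ^ 2 := by
    have h1 : ∀ i j : Fin 3, ((Q * Q) i j) ^ 2 ≤
        (∑ k, (Q i k) ^ 2) * (∑ k, (Q k j) ^ 2) := by
      intro i j
      simpa [Matrix.mul_apply] using
        Finset.sum_mul_sq_le_sq_mul_sq (Finset.univ : Finset (Fin 3))
          (fun k => Q i k) (fun k => Q k j)
    calc s ≤ ∑ i, ∑ j, (∑ k, (Q i k) ^ 2) * (∑ k, (Q k j) ^ 2) :=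
            Finset.sum_le_sum fun i _ => Finset.sum_le_sum fun j _ => h1 i j
      _ = p ^ 2 := by
          rw [hp_def]
          rw [show (∑ i, ∑ j, (∑ k, (Q i k) ^ 2) * (∑ k, (Q k j) ^ 2))
              = (∑ i, ∑ k, (Q i k) ^ 2) * (∑ j, ∑ k, (Q k j) ^ 2) by
            rw [Finset.sum_mul_sum]]
          rw [Finset.sum_comm (f := fun j k => (Q k j) ^ 2)]
          ring
  have hq3 : q ^ 2 ≤ p ^ 3 := by nlinarith [mul_le_mul_of_nonneg_right hsp hp]
  have key : 0 ≤ b ^ 2 * p - 2 * b * c * q + c ^ 2 * p ^ 2 := by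
    rcases eq_or_lt_of_le hp with h0 | h0
    · have hq0 : q = 0 := by nlinarith
      rw [← h0, hq0]; nlinarith
    · nlinarith [sq_nonneg (b * p - c * q), mul_pos h0 h0]
  rw [htr2, htr3]
  have hc' : c ≠ 0 := ne_of_gt hc
  have hgoal : a * p - b * q + c * p ^ 2 -
      c / 2 * p * (p - (b ^ 2 / c ^ 2 - 2 * a / c))
      = (b ^ 2 * p - 2 * b * c * q + c ^ 2 * p ^ 2) / (2 * c) := by
    field_simp
    ring
  have := div_nonneg key (by linarith : (0:ℝ) ≤ 2 * c)
  linarith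
end
end

section
/- (Lemma 4.2, mollified version.) Let g₀ ≥ 0 and m ≥ 1, let D ⊆ 𝒮₀ be nonempty with |A| ≤ 2/√3 for every A ∈ D, let G : D → ℝ satisfy G(A) ≥ −g₀ for all A ∈ D, and set G̃(Q) := inf_{A ∈ D} ( m|A − Q|² + G(A) ). Let Φ : 𝒮₀ → [0,∞) be measurable with ∫_{𝒮₀} Φ = 1 and Φ(R) = 0 whenever |R| > 1, and set Φ_m(R) := m⁵·Φ(mR). Then for every Q ∈ 𝒮₀ with |Q| ≥ 11 such that R ↦ G̃(Q − R)Φ_m(R) is integrable on 𝒮₀, one has ∫_{𝒮₀} G̃(Q − R) Φ_m(R) dR ≥ (m/4)|Q|² − g₀. -/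
noncomputable section
open MeasureTheory

/-- Lemma 4.2, mollified version. Here `E` plays the role of the
5-dimensional real inner product space `𝒮₀` of symmetric traceless 3×3 matrices with the
Frobenius inner product, and the measure is the Lebesgue (Haar) measure normalized so that
the unit cube of an orthonormal basis `b` has volume 1, i.e. `b.toBasis.addHaar`.
If `g₀ ≥ 0`, `m ≥ 1`, `D ⊆ E` is nonempty with `‖A‖ ≤ 2/√3` on `D`, `G ≥ −g₀` on `D`,
`G̃(Q) := inf_{A ∈ D} (m‖A − Q‖² + G(A))`, `Φ ≥ 0` is measurable with `∫ Φ = 1` and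
`Φ(R) = 0` for `‖R‖ > 1`, and `Φ_m(R) := m⁵ Φ(mR)`, then for every `Q` with `‖Q‖ ≥ 11`
for which `R ↦ G̃(Q − R)Φ_m(R)` is integrable:
`∫ G̃(Q − R) Φ_m(R) dR ≥ (m/4)‖Q‖² − g₀`. -/
theorem statement_9 (E : Type*) [NormedAddCommGroup E] [InnerProductSpace ℝ E]
    [FiniteDimensional ℝ E] [MeasurableSpace E] [BorelSpace E]
    (hdim : Module.finrank ℝ E = 5)
    (b : OrthonormalBasis (Fin 5) ℝ E)
    (g₀ m : ℝ) (hg₀ : 0 ≤ g₀) (hm : 1 ≤ m)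
    (D : Set E) (hDne : D.Nonempty) (hDb : ∀ A ∈ D, ‖A‖ ≤ 2 / Real.sqrt 3)
    (G : E → ℝ) (hG : ∀ A ∈ D, -g₀ ≤ G A)
    (Gt : E → ℝ)
    (hGt : ∀ Q : E, Gt Q = sInf ((fun A => m * ‖A - Q‖ ^ 2 + G A) '' D))
    (Φ : E → ℝ) (hΦmeas : Measurable Φ) (hΦnn : ∀ R, 0 ≤ Φ R)
    (hΦ1 : ∫ R, Φ R ∂(b.toBasis.addHaar) = 1)
    (hΦsupp : ∀ R : E, 1 < ‖R‖ → Φ R = 0)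
    (Φm : E → ℝ) (hΦm : ∀ R : E, Φm R = m ^ 5 * Φ (m • R))
    (Q : E) (hQ : 11 ≤ ‖Q‖)
    (hint : Integrable (fun R => Gt (Q - R) * Φm R) b.toBasis.addHaar) :
    m / 4 * ‖Q‖ ^ 2 - g₀ ≤ ∫ R, Gt (Q - R) * Φm R ∂(b.toBasis.addHaar) := by
  set μ := b.toBasis.addHaar
  have hm0 : (0:ℝ) < m := lt_of_lt_of_le one_pos hm
  set c : ℝ := m / 4 * ‖Q‖ ^ 2 - g₀ with hc
  -- integral of Φm is 1
  have hΦmint : ∫ R, Φm R ∂μ = 1 := by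
    have := Measure.integral_comp_smul_of_nonneg μ Φ m (hR := hm0.le)
    rw [hdim] at this
    simp only [hΦm]
    rw [integral_const_mul, this, hΦ1, smul_eq_mul, mul_one,
      mul_inv_cancel₀ (by positivity)]
  -- Φm nonneg
  have hΦmnn : ∀ R, 0 ≤ Φm R := by
    intro R; rw [hΦm]; exact mul_nonneg (by positivity) (hΦnn _)
  -- Φm integrable
  have hΦint : Integrable Φ μ := integrable_of_integral_eq_one hΦ1
  have hΦmInt : Integrable Φm μ := by
    have : Integrable (fun R => Φ (m • R)) μ := hΦint.comp_smul hm0.ne'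
    have := this.const_mul (m ^ 5)
    exact this.congr (Filter.Eventually.of_forall fun R => (hΦm R).symm)
  -- Key pointwise bound: Gt (Q - R) ≥ c whenever ‖R‖ ≤ 1
  have hsqrt3 : (1:ℝ) ≤ Real.sqrt 3 := by
    rw [show (1:ℝ) = Real.sqrt 1 by simp]
    exact Real.sqrt_le_sqrt (by norm_num)
  have key : ∀ R : E, ‖R‖ ≤ 1 → c ≤ Gt (Q - R) := by
    intro R hR
    rw [hGt]
    apply le_csInf (hDne.image _)
    rintro x ⟨A, hA, rfl⟩
    have hAb : ‖A‖ ≤ 2 := (hDb A hA).trans (by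
      rw [div_le_iff₀ (by positivity)]
      nlinarith)
    have h1 : ‖Q‖ - 3 ≤ ‖A - (Q - R)‖ := by
      have := norm_sub_le (A + R) (A - (Q - R))
      have h2 : A + R - (A - (Q - R)) = Q := by abel
      rw [h2] at this
      have h3 : ‖A + R‖ ≤ 3 := (norm_add_le A R).trans (by linarith)
      linarith
    have hQ2 : ‖Q‖ / 2 ≤ ‖A - (Q - R)‖ := by linarith
    have hnn : (0:ℝ) ≤ ‖Q‖ / 2 := by positivity
    have hsq : ‖Q‖ ^ 2 / 4 ≤ ‖A - (Q - R)‖ ^ 2 := by nlinarith [norm_nonneg (A - (Q - R))]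
    have := hG A hA
    have : m * (‖Q‖ ^ 2 / 4) ≤ m * ‖A - (Q - R)‖ ^ 2 :=
      mul_le_mul_of_nonneg_left hsq hm0.le
    simp only [hc]
    nlinarith [hG A hA]
  -- pointwise: c * Φm R ≤ Gt (Q - R) * Φm R
  have hpt : ∀ R, c * Φm R ≤ Gt (Q - R) * Φm R := by
    intro R
    rcases eq_or_lt_of_le (hΦmnn R) with h | h
    · rw [← h]; simp
    · have hΦne : Φ (m • R) ≠ 0 := by
        intro h0
        rw [hΦm, h0, mul_zero] at h
        exact lt_irrefl _ h
      have hnorm : ‖m • R‖ ≤ 1 := by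
        by_contra hcon
        exact hΦne (hΦsupp _ (lt_of_not_ge hcon))
      have hRnorm : ‖R‖ ≤ 1 := by
        rw [norm_smul, Real.norm_eq_abs, abs_of_pos hm0] at hnorm
        nlinarith [norm_nonneg R]
      exact mul_le_mul_of_nonneg_right (key R hRnorm) (hΦmnn R)
  calc c = c * ∫ R, Φm R ∂μ := by rw [hΦmint, mul_one]
    _ = ∫ R, c * Φm R ∂μ := (integral_const_mul c _).symm
    _ ≤ ∫ R, Gt (Q - R) * Φm R ∂μ :=
        integral_mono (hΦmInt.const_mul c) hint fun R => hpt R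
end
end

section
/- (Integration-by-parts identity (2.4).) Let Q : ℝ³ → M₃(ℝ) be twice continuously differentiable and φ ∈ C_c^∞(ℝ³). Then −∫_{ℝ³} ΔQ_{γδ} ∂_αQ_{γδ} ∂_αφ dx = ∫_{ℝ³} ½ |∇Q|² Δφ dx + ∫_{ℝ³} ( (∇Q⊗∇Q)_{αβ} − |∇Q|² δ_{αβ} ) ∂_α∂_βφ dx, where (∇Q⊗∇Q)_{αβ} := ∂_αQ_{γδ} ∂_βQ_{γδ}, |∇Q|² := ∂_αQ_{γδ} ∂_αQ_{γδ}, and repeated Greek indices are summed from 1 to 3. -/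
noncomputable section
open Matrix MeasureTheory

/-- Partial derivative `∂_α f` of a scalar function on `ℝ³`. -/
def pd (α : Fin 3) (f : E3 → ℝ) (x : E3) : ℝ :=
  fderiv ℝ f x (EuclideanSpace.single α 1)

/-
Adding the two right-hand integrands to the left-hand one (taken with a plus sign) leaves, once
the symmetry of the second derivatives of `Q` and `φ` is used, the pointwise sum over `γ, δ, α, β`
of `∂_β(∂_βQ_{γδ} ∂_αQ_{γδ} ∂_αφ) − ½ ∂_α(∂_βQ_{γδ} ∂_βQ_{γδ} ∂_αφ)`. Each of these functions is a
partial derivative of a compactly supported `C¹` function, so it integrates to zero.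
-/

section Calculus

variable {f g : E3 → ℝ}

lemma ContDiff.pd {n m : WithTop ℕ∞} (hf : ContDiff ℝ n f) (hmn : m + 1 ≤ n) (α : Fin 3) :
    ContDiff ℝ m (pd α f) :=
  (hf.fderiv_right hmn).clm_apply contDiff_const

lemma pd_eq_zero_of_notMem_tsupport {x : E3} (hx : x ∉ tsupport f) (α : Fin 3) : pd α f x = 0 := by
  simp [pd, fderiv_of_notMem_tsupport ℝ hx]

lemma tsupport_pd_subset (α : Fin 3) : tsupport (pd α f) ⊆ tsupport f :=
  closure_minimal (fun _ hx => by_contra fun h => hx (pd_eq_zero_of_notMem_tsupport h α))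
    (isClosed_tsupport f)

lemma HasCompactSupport.pd (hf : HasCompactSupport f) (α : Fin 3) :
    HasCompactSupport (pd α f) :=
  hf.fderiv_apply ℝ (EuclideanSpace.single α 1)

lemma pd_mul {x : E3} (hf : DifferentiableAt ℝ f x) (hg : DifferentiableAt ℝ g x) (α : Fin 3) :
    pd α (fun y => f y * g y) x = pd α f x * g x + f x * pd α g x := by
  simp only [pd, fderiv_fun_mul hf hg, _root_.add_apply, _root_.smul_apply, smul_eq_mul]
  ring

lemma pd_mul_mul {h : E3 → ℝ} {x : E3} (hf : DifferentiableAt ℝ f x)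
    (hg : DifferentiableAt ℝ g x) (hh : DifferentiableAt ℝ h x) (α : Fin 3) :
    pd α (fun y => f y * g y * h y) x
      = pd α f x * g x * h x + f x * pd α g x * h x + f x * g x * pd α h x := by
  rw [pd_mul (f := fun y => f y * g y) (hf.mul hg) hh, pd_mul hf hg]
  ring

lemma pd_comm (hf : ContDiff ℝ 2 f) (α β : Fin 3) (x : E3) : pd α (pd β f) x = pd β (pd α f) x := by
  have hdf : DifferentiableAt ℝ (fderiv ℝ f) x :=
    (hf.fderiv_right (m := 1) (by norm_num)).differentiable one_ne_zero x
  have hsymm := hf.contDiffAt.isSymmSndFDerivAt (x := x) (by simp)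
  have hpd : ∀ γ ν : Fin 3, pd ν (pd γ f) x =
      fderiv ℝ (fderiv ℝ f) x (EuclideanSpace.single ν 1) (EuclideanSpace.single γ 1) := by
    intro γ ν
    show fderiv ℝ (fun y => fderiv ℝ f y _) x _ = _
    rw [fderiv_clm_apply hdf (differentiableAt_const _)]
    simp
  rw [hpd, hpd, hsymm]

lemma continuous_pd (hf : ContDiff ℝ 1 f) (α : Fin 3) : Continuous (pd α f) :=
  (hf.pd (m := 0) le_rfl α).continuous

lemma continuous_pd_pd (hf : ContDiff ℝ 2 f) (α β : Fin 3) :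
    Continuous (pd α (pd β f)) :=
  continuous_pd (hf.pd (m := 1) (by norm_num) β) α

lemma integrable_pd (hf : ContDiff ℝ 1 f) (hfc : HasCompactSupport f) (α : Fin 3) :
    Integrable (pd α f) :=
  (continuous_pd hf α).integrable_of_hasCompactSupport (hfc.pd α)

lemma integral_pd_eq_zero (hf : ContDiff ℝ 1 f) (hfc : HasCompactSupport f) (α : Fin 3) :
    ∫ x, pd α f x = 0 := by
  have hpd := integrable_pd hf hfc α
  have h := integral_mul_fderiv_eq_neg_fderiv_mul_of_integrable (μ := volume)
    (f := fun _ => (1 : ℝ)) (g := f) (v := EuclideanSpace.single α 1)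
    (by simp) (by simp only [one_mul]; exact hpd)
    (by simp only [one_mul]; exact hf.continuous.integrable_of_hasCompactSupport hfc)
    (fun _ _ => differentiableAt_const _) (fun x _ => hf.differentiable one_ne_zero x)
  simpa [pd] using h

lemma pd_mul_pd_mul_pd_sub_pd_mul_pd_mul_pd {φ : E3 → ℝ} (hf : ContDiff ℝ 2 f) (hφ : ContDiff ℝ 2 φ)
    (α β : Fin 3) (x : E3) :
    pd β (fun y => pd β f y * pd α f y * pd α φ y) x
        - pd α (fun y => pd β f y * pd β f y * pd α φ y) x / 2
      = pd β (pd β f) x * pd α f x * pd α φ x + pd α f x * pd β f x * pd α (pd β φ) x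
        - pd β f x ^ 2 * pd α (pd α φ) x / 2 := by
  have hdf : ∀ γ, DifferentiableAt ℝ (pd γ f) x := fun γ =>
    (hf.pd (m := 1) (by norm_num) γ).differentiable one_ne_zero x
  have hdφ : ∀ γ, DifferentiableAt ℝ (pd γ φ) x := fun γ =>
    (hφ.pd (m := 1) (by norm_num) γ).differentiable one_ne_zero x
  rw [pd_mul_mul (hdf β) (hdf α) (hdφ α), pd_mul_mul (hdf β) (hdf β) (hdφ α),
    pd_comm hf α β, pd_comm hφ α β]
  ring

end Calculus

lemma integrable_finset_sum_and_integral_eq_zero {X ι : Type*} [MeasurableSpace X] {μ : Measure X}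
    (s : Finset ι) {g : ι → X → ℝ} (hg : ∀ i ∈ s, Integrable (g i) μ ∧ ∫ x, g i x ∂μ = 0) :
    Integrable (fun x => ∑ i ∈ s, g i x) μ ∧ ∫ x, ∑ i ∈ s, g i x ∂μ = 0 :=
  ⟨integrable_finsetSum s fun i hi => (hg i hi).1, by
    rw [integral_finsetSum s fun i hi => (hg i hi).1]
    exact Finset.sum_eq_zero fun i hi => (hg i hi).2⟩

/- With `a γ δ α = ∂_αQ_{γδ}`, `h γ δ β = ∂_β∂_βQ_{γδ}`, `p = ∇φ` and `P = ∇²φ`, the left side is the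
sum of the three integrands of (2.4). -/
open Finset in
lemma laplacian_energy_stress_sum_eq {ι κ : Type*} [Fintype ι] [Fintype κ] [DecidableEq ι]
    (a h : κ → κ → ι → ℝ) (p : ι → ℝ) (P : ι → ι → ℝ) :
    (∑ α, ∑ γ, ∑ δ, (∑ β, h γ δ β) * a γ δ α * p α)
        + 1 / 2 * (∑ α, ∑ γ, ∑ δ, a γ δ α ^ 2) * (∑ β, P β β)
        + ∑ α, ∑ β, ((∑ γ, ∑ δ, a γ δ α * a γ δ β)
            - (∑ μ, ∑ γ, ∑ δ, a γ δ μ ^ 2) * (if α = β then (1 : ℝ) else 0)) * P α β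
      = ∑ γ, ∑ δ, ∑ α, ∑ β,
          (h γ δ β * a γ δ α * p α + a γ δ α * a γ δ β * P α β - a γ δ β ^ 2 * P α α / 2) := by
  simp only [sub_mul, mul_ite, mul_one, mul_zero, ite_mul, zero_mul, sum_sub_distrib, sum_ite_eq,
    mem_univ, if_true]
  simp only [mul_assoc, mul_sum, sum_mul, sum_add_distrib]
  simp_rw [sum_comm (s := (univ : Finset ι)) (t := (univ : Finset κ))]
  simp only [← mul_sum, ← sum_div]
  ring

lemma integrands_add_eq_sum_pd_sub_pd (Q : E3 → M3)
    (hQ : ∀ γ δ : Fin 3, ContDiff ℝ 2 (fun x => Q x γ δ)) {φ : E3 → ℝ} (hφ : ContDiff ℝ 2 φ)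
    (x : E3) :
    (∑ α, ∑ γ, ∑ δ, (∑ β, pd β (fun y => pd β (fun z => Q z γ δ) y) x)
          * pd α (fun z => Q z γ δ) x * pd α φ x)
        + (1 : ℝ) / 2 * (∑ α, ∑ γ, ∑ δ, (pd α (fun z => Q z γ δ) x) ^ 2)
            * (∑ β, pd β (fun y => pd β φ y) x)
        + ∑ α, ∑ β,
            ((∑ γ, ∑ δ, pd α (fun z => Q z γ δ) x * pd β (fun z => Q z γ δ) x)
              - (∑ μ, ∑ γ, ∑ δ, (pd μ (fun z => Q z γ δ) x) ^ 2)
                * (if α = β then (1 : ℝ) else 0))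
            * pd α (fun y => pd β φ y) x
      = ∑ γ, ∑ δ, ∑ α, ∑ β,
          (pd β (fun y => pd β (fun z => Q z γ δ) y * pd α (fun z => Q z γ δ) y * pd α φ y) x
            - pd α (fun y => pd β (fun z => Q z γ δ) y * pd β (fun z => Q z γ δ) y
                * pd α φ y) x / 2) := by
  simp only [pd_mul_pd_mul_pd_sub_pd_mul_pd_mul_pd (hQ _ _) hφ]
  exact laplacian_energy_stress_sum_eq (fun γ δ α => pd α (fun z => Q z γ δ) x)
    (fun γ δ β => pd β (pd β fun z => Q z γ δ) x) (fun α => pd α φ x)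
    (fun α β => pd α (pd β φ) x)

lemma integral_sum_pd_sub_pd_eq_zero (Q : E3 → M3)
    (hQ : ∀ γ δ : Fin 3, ContDiff ℝ 2 (fun x => Q x γ δ)) {φ : E3 → ℝ} (hφ : ContDiff ℝ 2 φ)
    (hφc : HasCompactSupport φ) :
    ∫ x, ∑ γ, ∑ δ, ∑ α, ∑ β,
          (pd β (fun y => pd β (fun z => Q z γ δ) y * pd α (fun z => Q z γ δ) y * pd α φ y) x
            - pd α (fun y => pd β (fun z => Q z γ δ) y * pd β (fun z => Q z γ δ) y
                * pd α φ y) x / 2) = 0 := by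
  have hQ1 : ∀ γ δ α, ContDiff ℝ 1 (pd α fun z => Q z γ δ) := fun γ δ α =>
    (hQ γ δ).pd (by norm_num) α
  have hφ1 : ∀ α, ContDiff ℝ 1 (pd α φ) := fun α => hφ.pd (by norm_num) α
  have hflux : ∀ γ δ a b c, ContDiff ℝ 1
      (fun y => pd a (fun z => Q z γ δ) y * pd b (fun z => Q z γ δ) y * pd c φ y) ∧
      HasCompactSupport
        (fun y => pd a (fun z => Q z γ δ) y * pd b (fun z => Q z γ δ) y * pd c φ y) :=
    fun γ δ a b c => ⟨((hQ1 γ δ a).mul (hQ1 γ δ b)).mul (hφ1 c), (hφc.pd c).mul_left⟩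
  refine (integrable_finset_sum_and_integral_eq_zero _ fun γ _ =>
    integrable_finset_sum_and_integral_eq_zero _ fun δ _ =>
    integrable_finset_sum_and_integral_eq_zero _ fun α _ =>
    integrable_finset_sum_and_integral_eq_zero _ fun β _ => ?_).2
  obtain ⟨hU, hUc⟩ := hflux γ δ β α α
  obtain ⟨hW, hWc⟩ := hflux γ δ β β α
  refine ⟨(integrable_pd hU hUc β).sub ((integrable_pd hW hWc α).div_const 2), ?_⟩
  rw [integral_sub (integrable_pd hU hUc β) ((integrable_pd hW hWc α).div_const 2),
    integral_div, integral_pd_eq_zero hU hUc, integral_pd_eq_zero hW hWc]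
  simp

/-- Integration-by-parts identity (2.4): for a `C²` matrix field `Q` and a
test function `φ`:
`−∫ ΔQ_{γδ} ∂_αQ_{γδ} ∂_αφ = ∫ ½|∇Q|² Δφ + ∫ ((∇Q⊗∇Q)_{αβ} − |∇Q|² δ_{αβ}) ∂_α∂_βφ`. -/
theorem statement_14 (Q : E3 → M3)
    (hQ : ∀ γ δ : Fin 3, ContDiff ℝ 2 (fun x => Q x γ δ))
    (φ : E3 → ℝ) (hφ : ContDiff ℝ (⊤ : ℕ∞) φ) (hφc : HasCompactSupport φ) :
    -∫ x : E3, ∑ α, ∑ γ, ∑ δ,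
        (∑ β, pd β (fun y => pd β (fun z => Q z γ δ) y) x)
          * pd α (fun z => Q z γ δ) x * pd α φ x
      = (∫ x : E3, (1 : ℝ) / 2 * (∑ α, ∑ γ, ∑ δ, (pd α (fun z => Q z γ δ) x) ^ 2)
            * (∑ β, pd β (fun y => pd β φ y) x))
        + ∫ x : E3, ∑ α, ∑ β,
            ((∑ γ, ∑ δ, pd α (fun z => Q z γ δ) x * pd β (fun z => Q z γ δ) x)
              - (∑ μ, ∑ γ, ∑ δ, (pd μ (fun z => Q z γ δ) x) ^ 2)
                * (if α = β then (1 : ℝ) else 0))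
            * pd α (fun y => pd β φ y) x := by
  have hφC2 : ContDiff ℝ 2 φ := hφ.of_le (WithTop.coe_le_coe.mpr le_top)
  have hQ1 : ∀ γ δ α, Continuous (pd α fun z => Q z γ δ) := fun γ δ α =>
    continuous_pd ((hQ γ δ).of_le one_le_two) α
  have hQ2 : ∀ γ δ α β, Continuous (pd α (pd β fun z => Q z γ δ)) := fun γ δ =>
    continuous_pd_pd (hQ γ δ)
  have hφ1 : ∀ α, Continuous (pd α φ) := continuous_pd (hφC2.of_le one_le_two)
  have hφ2 : ∀ α β, Continuous (pd α (pd β φ)) := continuous_pd_pd hφC2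
  have hdiv := integral_congr_ae (μ := volume)
    (.of_forall (integrands_add_eq_sum_pd_sub_pd Q hQ hφC2))
  rw [integral_sum_pd_sub_pd_eq_zero Q hQ hφC2 hφc, integral_add, integral_add] at hdiv
  · linarith
  -- every integrand carries a factor `∂φ` or `∂²φ`, which vanishes off `tsupport φ`
  all_goals
    refine Continuous.integrable_of_hasCompactSupport (by fun_prop) (.intro hφc fun x hx => ?_)
    simp [pd_eq_zero_of_notMem_tsupport hx,
      pd_eq_zero_of_notMem_tsupport (fun h => hx (tsupport_pd_subset _ h))]
end
end

section
/- (Covering argument for the singular set.) Let f : ℝ³×ℝ → [0,∞) be Lebesgue integrable and let ε > 0. Define Σ := { z ∈ ℝ³×ℝ : limsup_{r→0⁺} r⁻¹ ∫_{P_r(z)} f ≥ ε }. Then Σ has Lebesgue measure zero, and for every κ > 0 there exist countably many points z_i ∈ ℝ³×ℝ and radii r_i ∈ (0, κ) such that Σ ⊆ ⋃_i P_{5 r_i}(z_i) and ∑_i r_i ≤ κ. (This expresses that the one-dimensional parabolic Hausdorff measure of Σ vanishes.) -/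
/-!
At every point of `Σ` there are arbitrarily small radii `r` with `∫_{P_r(z)} f ≥ c r` for a fixed
`0 < c < ε`, and these cylinders can be taken inside any open `U ⊇ Σ`. Vitali's lemma extracts a
disjoint subfamily whose enlargements cover `Σ`; for backward cylinders the enlargement of
`P_r(x,t)` is `P_{5r}(x, t + 4r²)`, which is why the centres of the cover are time-shifted.
Disjointness gives `c ∑ rᵢ ≤ ∫_U f`. With `U` the whole space, `|P_{5r}| ≲ r⁵ ≤ κ⁴ r` yields
`|Σ| ≲ κ⁴` for every `κ`, so `|Σ| = 0`; then `U` can be chosen with `∫_U f` arbitrarily small,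
which makes `∑ rᵢ ≤ κ`.
-/

noncomputable section
open MeasureTheory Metric Set Filter
open scoped ENNReal

/-- The backward parabolic cylinder `P_r(x,t) = B_r(x) × (t − r², t)`. -/
def Pcyl (r : ℝ) (z : E3 × ℝ) : Set (E3 × ℝ) :=
  ball z.1 r ×ˢ Ioo (z.2 - r ^ 2) z.2

/-- The "singular" set of points where the renormalized parabolic averages of `f` do not
tend to values below `ε`: `Σ = { z : limsup_{r→0⁺} r⁻¹ ∫_{P_r(z)} f ≥ ε }`. -/
def singSet (f : E3 × ℝ → ℝ) (ε : ℝ) : Set (E3 × ℝ) :=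
  {z | ENNReal.ofReal ε ≤
    limsup (fun r : ℝ => (ENNReal.ofReal r)⁻¹ * ∫⁻ p in Pcyl r z, ENNReal.ofReal (f p))
      (nhdsWithin 0 (Ioi 0))}

open Topology

lemma isOpen_Pcyl (r : ℝ) (z : E3 × ℝ) : IsOpen (Pcyl r z) :=
  isOpen_ball.prod isOpen_Ioo

lemma Pcyl_nonempty {r : ℝ} (hr : 0 < r) (z : E3 × ℝ) : (Pcyl r z).Nonempty :=
  (nonempty_ball.2 hr).prod (nonempty_Ioo.2 (by nlinarith))

lemma Pcyl_mono {r r' : ℝ} (hr : 0 ≤ r) (h : r ≤ r') (z : E3 × ℝ) : Pcyl r z ⊆ Pcyl r' z :=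
  prod_mono (ball_subset_ball h) (Ioo_subset_Ioo (by nlinarith) le_rfl)

lemma Pcyl_subset_ball {r : ℝ} (hr : r ≤ 1) (z : E3 × ℝ) : Pcyl r z ⊆ ball z r := by
  rintro p ⟨hx, ht⟩
  rw [mem_Ioo] at ht
  rw [mem_ball, Prod.dist_eq, max_lt_iff, Real.dist_eq, abs_lt]
  have : 0 ≤ r := dist_nonneg.trans (mem_ball.1 hx).le
  exact ⟨hx, by nlinarith, by nlinarith⟩

lemma eventually_Pcyl_subset {U : Set (E3 × ℝ)} (hU : IsOpen U) {z : E3 × ℝ} (hz : z ∈ U) :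
    ∀ᶠ r in 𝓝[>] 0, Pcyl r z ⊆ U := by
  obtain ⟨η, hη, hball⟩ := Metric.isOpen_iff.1 hU z hz
  filter_upwards [Ioo_mem_nhdsGT (lt_min hη one_pos)] with r hr
  exact (Pcyl_subset_ball (hr.2.trans_le (min_le_right _ _)).le z).trans
    ((ball_subset_ball (hr.2.trans_le (min_le_left _ _)).le).trans hball)

lemma mem_Pcyl_five_mul_of_inter_nonempty {r r' : ℝ} {z z' : E3 × ℝ} (hr : 0 < r)
    (hle : r ≤ 2 * r') (hne : (Pcyl r z ∩ Pcyl r' z').Nonempty) :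
    z ∈ Pcyl (5 * r') (z'.1, z'.2 + 4 * r' ^ 2) := by
  obtain ⟨⟨y, s⟩, ⟨hy, hs⟩, ⟨hy', hs'⟩⟩ := hne
  simp only [Pcyl, mem_ball, mem_Ioo, mem_prod] at hy hs hy' hs' ⊢
  refine ⟨?_, by nlinarith, by nlinarith⟩
  calc dist z.1 z'.1 ≤ dist y z.1 + dist y z'.1 := dist_triangle_left _ _ _
    _ < 5 * r' := by linarith

lemma volume_Pcyl {r : ℝ} (hr : 0 ≤ r) (z : E3 × ℝ) :
    volume (Pcyl r z) = ENNReal.ofReal r ^ 5 * volume (ball (0 : E3) 1) := by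
  rw [Pcyl, Measure.volume_eq_prod, Measure.prod_prod, Real.volume_Ioo,
    Measure.addHaar_ball _ _ hr, finrank_euclideanSpace_fin, sub_sub_cancel,
    ENNReal.ofReal_pow hr, ENNReal.ofReal_pow hr]
  ring

lemma frequently_mul_le_setLIntegral_Pcyl {f : E3 × ℝ → ℝ} {ε : ℝ} {z : E3 × ℝ}
    (hz : z ∈ singSet f ε) {c : ℝ≥0∞} (hc : c < ENNReal.ofReal ε) :
    ∃ᶠ r in 𝓝[>] 0, c * ENNReal.ofReal r ≤ ∫⁻ p in Pcyl r z, ENNReal.ofReal (f p) := by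
  have hlt := frequently_lt_of_lt_limsup (by isBoundedDefault) (hc.trans_le hz)
  refine (hlt.and_eventually self_mem_nhdsWithin).mono fun r ⟨hcr, hr⟩ => ?_
  rw [mul_comm, ← div_eq_mul_inv] at hcr
  exact (ENNReal.le_div_iff_mul_le (Or.inl (by simpa using hr)) (Or.inl ENNReal.ofReal_ne_top)).1
    hcr.le

lemma exists_Pcyl_subset_mul_le_setLIntegral {f : E3 × ℝ → ℝ} {ε : ℝ} {z : E3 × ℝ}
    (hz : z ∈ singSet f ε) {c : ℝ≥0∞} (hc : c < ENNReal.ofReal ε) {U : Set (E3 × ℝ)}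
    (hU : IsOpen U) (hzU : z ∈ U) {δ : ℝ} (hδ : 0 < δ) :
    ∃ r ∈ Ioo 0 δ, c * ENNReal.ofReal r ≤ ∫⁻ p in Pcyl r z, ENNReal.ofReal (f p) ∧
      Pcyl r z ⊆ U := by
  obtain ⟨r, hr, hrU, hrδ⟩ := ((frequently_mul_le_setLIntegral_Pcyl hz hc).and_eventually
    ((eventually_Pcyl_subset hU hzU).and (Ioo_mem_nhdsGT hδ))).exists
  exact ⟨r, hrδ, hr, hrU⟩

lemma exists_countable_disjoint_Pcyl_cover {f : E3 × ℝ → ℝ} {ε : ℝ} {c : ℝ≥0∞}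
    (hc : c < ENNReal.ofReal ε) {κ : ℝ} (hκ : 0 < κ) {U : Set (E3 × ℝ)} (hU : IsOpen U)
    (hsU : singSet f ε ⊆ U) :
    ∃ (u : Set (E3 × ℝ)) (ρ : E3 × ℝ → ℝ), u.Countable ∧ (∀ b ∈ u, ρ b ∈ Ioo 0 κ) ∧
      c * ∑' b : u, ENNReal.ofReal (ρ b) ≤ ∫⁻ p in U, ENNReal.ofReal (f p) ∧
      singSet f ε ⊆ ⋃ b ∈ u, Pcyl (5 * ρ b) (b.1, b.2 + 4 * ρ b ^ 2) := by
  choose! ρ hρ hρf hρU using fun z (hz : z ∈ singSet f ε) =>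
    exists_Pcyl_subset_mul_le_setLIntegral hz hc hU (hsU hz) hκ
  obtain ⟨u, hu, hdisj, hcov⟩ := Vitali.exists_disjoint_subfamily_covering_enlargement
    (fun z => Pcyl (ρ z) z) (singSet f ε) ρ 2 one_lt_two (fun z hz => (hρ z hz).1.le) κ
    (fun z hz => (hρ z hz).2.le) (fun z hz => Pcyl_nonempty (hρ z hz).1 z)
  have hcount : u.Countable := hdisj.countable_of_isOpen (fun _ _ => isOpen_Pcyl _ _)
    fun z hz => Pcyl_nonempty (hρ z (hu hz)).1 z
  have : Countable u := hcount.to_subtype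
  refine ⟨u, ρ, hcount, fun b hb => hρ b (hu hb), ?_, fun z hz => ?_⟩
  · calc c * ∑' b : u, ENNReal.ofReal (ρ b) = ∑' b : u, c * ENNReal.ofReal (ρ b) :=
          ENNReal.tsum_mul_left.symm
      _ ≤ ∑' b : u, ∫⁻ p in Pcyl (ρ b) b, ENNReal.ofReal (f p) :=
          ENNReal.tsum_le_tsum fun b => hρf b (hu b.2)
      _ = ∫⁻ p in ⋃ b : u, Pcyl (ρ b) b, ENNReal.ofReal (f p) :=
          (lintegral_iUnion (fun _ => (isOpen_Pcyl _ _).measurableSet) hdisj.subtype _).symm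
      _ ≤ ∫⁻ p in U, ENNReal.ofReal (f p) :=
          lintegral_mono_set (iUnion_subset fun b => hρU b (hu b.2))
  · obtain ⟨b, hb, hne, hle⟩ := hcov z hz
    exact mem_biUnion hb (mem_Pcyl_five_mul_of_inter_nonempty (hρ z hz).1 hle hne)

lemma exists_nat_seq_le_of_countable {ι α : Type*} [Countable ι] [Nonempty α] (c : ι → α)
    {ρ : ι → ℝ} {R η : ℝ} (hR : 0 ≤ R) (hρ : ∀ i, ρ i ∈ Icc 0 R) (hη : 0 < η) :
    ∃ (z : ℕ → α) (r : ℕ → ℝ), (∀ n, r n ∈ Ioc 0 (R + η)) ∧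
      (∀ i, ∃ n, z n = c i ∧ ρ i ≤ r n) ∧
      ∑' n, ENNReal.ofReal (r n) ≤ ∑' i, ENNReal.ofReal (ρ i) + ENNReal.ofReal η := by
  obtain ⟨e, he⟩ := Countable.exists_injective_nat ι
  set g : ℕ → ℝ := Function.extend e ρ 0
  have hg : ∀ n, g n ∈ Icc 0 R := by
    intro n
    by_cases hn : ∃ i, e i = n
    · obtain ⟨i, rfl⟩ := hn
      simpa only [g, he.extend_apply] using hρ i
    · simpa only [g, Function.extend_apply' _ _ _ hn] using ⟨le_rfl, hR⟩
  have hpad : ∀ n : ℕ, 0 < η / 2 / 2 ^ n ∧ η / 2 / 2 ^ n ≤ η := fun n =>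
    ⟨by positivity, div_le_of_le_mul₀ (by positivity) hη.le
      (by nlinarith [one_le_pow₀ (M₀ := ℝ) (n := n) one_le_two])⟩
  refine ⟨Function.extend e c fun _ => Classical.arbitrary α, fun n => g n + η / 2 / 2 ^ n,
    fun n => ⟨by linarith [(hg n).1, (hpad n).1], by linarith [(hg n).2, (hpad n).2]⟩,
    fun i => ⟨e i, he.extend_apply _ _ _, ?_⟩, ?_⟩
  · simp only [g, he.extend_apply]
    linarith [(hpad (e i)).1]
  have hsum_g : ∑' n, ENNReal.ofReal (g n) = ∑' i, ENNReal.ofReal (ρ i) := by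
    simp only [g, Function.apply_extend ENNReal.ofReal]
    have h0 : ENNReal.ofReal ∘ (0 : ℕ → ℝ) = 0 := funext fun _ => ENNReal.ofReal_zero
    rw [h0]
    exact tsum_extend_zero he (ENNReal.ofReal ∘ ρ)
  have hsum_pad : ∑' n : ℕ, ENNReal.ofReal (η / 2 / 2 ^ n) = ENNReal.ofReal η := by
    rw [← ENNReal.ofReal_tsum_of_nonneg (fun n => (hpad n).1.le) (summable_geometric_two' η),
      tsum_geometric_two']
  rw [← hsum_g, ← hsum_pad, ← ENNReal.tsum_add]
  exact ENNReal.tsum_le_tsum fun n => ENNReal.ofReal_add_le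

lemma exists_Pcyl_cover_mul_tsum_le {f : E3 × ℝ → ℝ} {ε : ℝ} {c : ℝ≥0∞}
    (hc : c < ENNReal.ofReal ε) {κ : ℝ} (hκ : 0 < κ) {U : Set (E3 × ℝ)} (hU : IsOpen U)
    (hsU : singSet f ε ⊆ U) :
    ∃ (z : ℕ → E3 × ℝ) (r : ℕ → ℝ), (∀ i, r i ∈ Ioo 0 κ) ∧
      singSet f ε ⊆ ⋃ i, Pcyl (5 * r i) (z i) ∧
      c * ∑' i, ENNReal.ofReal (r i) ≤
        (∫⁻ p in U, ENNReal.ofReal (f p)) + c * ENNReal.ofReal (κ / 2) := by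
  obtain ⟨u, ρ, hu, hρ, hsum, hcov⟩ :=
    exists_countable_disjoint_Pcyl_cover hc (by positivity : 0 < κ / 4) hU hsU
  have : Countable u := hu.to_subtype
  obtain ⟨z, r, hr, hzr, hrsum⟩ := exists_nat_seq_le_of_countable
    (fun b : u => ((b : E3 × ℝ).1, (b : E3 × ℝ).2 + 4 * ρ b ^ 2)) (ρ := fun b : u => ρ b)
    (by positivity) (fun b => Ioo_subset_Icc_self (hρ b b.2)) (by positivity : 0 < κ / 2)
  refine ⟨z, r, fun i => ⟨(hr i).1, (hr i).2.trans_lt (by linarith)⟩, fun p hp => ?_, ?_⟩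
  · obtain ⟨b, hb, hpb⟩ := mem_iUnion₂.1 (hcov hp)
    obtain ⟨i, hzi, hρi⟩ := hzr ⟨b, hb⟩
    exact mem_iUnion.2 ⟨i, hzi ▸ Pcyl_mono (by linarith [(hρ b hb).1]) (by linarith) _ hpb⟩
  · calc c * ∑' i, ENNReal.ofReal (r i)
        ≤ c * (∑' b : u, ENNReal.ofReal (ρ b) + ENNReal.ofReal (κ / 2)) := by
          gcongr
      _ ≤ (∫⁻ p in U, ENNReal.ofReal (f p)) + c * ENNReal.ofReal (κ / 2) := by
        rw [mul_add]
        exact add_le_add_left hsum _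

lemma volume_le_of_subset_iUnion_Pcyl {S : Set (E3 × ℝ)} {z : ℕ → E3 × ℝ} {r : ℕ → ℝ} {κ : ℝ}
    (hr : ∀ i, r i ∈ Icc 0 κ) (hS : S ⊆ ⋃ i, Pcyl (5 * r i) (z i)) :
    volume S ≤ 5 ^ 5 * volume (ball (0 : E3) 1) * ENNReal.ofReal κ ^ 4 *
      ∑' i, ENNReal.ofReal (r i) := by
  rw [← ENNReal.tsum_mul_left]
  refine (measure_mono hS).trans ((measure_iUnion_le _).trans (ENNReal.tsum_le_tsum fun i => ?_))
  have hκi : ENNReal.ofReal (r i) ≤ ENNReal.ofReal κ := ENNReal.ofReal_le_ofReal (hr i).2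
  rw [volume_Pcyl (by linarith [(hr i).1]), ENNReal.ofReal_mul (by norm_num), ENNReal.ofReal_ofNat]
  calc (5 * ENNReal.ofReal (r i)) ^ 5 * volume (ball (0 : E3) 1)
      = 5 ^ 5 * volume (ball (0 : E3) 1) * ENNReal.ofReal (r i) ^ 4 * ENNReal.ofReal (r i) := by
        ring
    _ ≤ 5 ^ 5 * volume (ball (0 : E3) 1) * ENNReal.ofReal κ ^ 4 * ENNReal.ofReal (r i) := by
        gcongr

lemma volume_singSet_eq_zero {f : E3 × ℝ → ℝ} (hf : Integrable f) {ε : ℝ} (hε : 0 < ε) :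
    volume (singSet f ε) = 0 := by
  obtain ⟨c, hc0, hc⟩ := exists_between (ENNReal.ofReal_pos.2 hε)
  set A := 5 ^ 5 * volume (ball (0 : E3) 1) * ((∫⁻ p, ENNReal.ofReal (f p)) + c)
  have hA : A ≠ ∞ := ENNReal.mul_ne_top (ENNReal.mul_ne_top (by norm_num)
    measure_ball_lt_top.ne) (ENNReal.add_ne_top.2 ⟨hf.lintegral_lt_top.ne, ne_top_of_lt hc⟩)
  have hbound : ∀ κ ∈ Ioc (0 : ℝ) 1, c * volume (singSet f ε) ≤ A * ENNReal.ofReal κ ^ 4 := by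
    rintro κ ⟨hκ, hκ1⟩
    obtain ⟨z, r, hr, hcov, hsum⟩ :=
      exists_Pcyl_cover_mul_tsum_le hc hκ isOpen_univ (subset_univ _)
    rw [Measure.restrict_univ] at hsum
    have hκc : c * ENNReal.ofReal (κ / 2) ≤ c :=
      mul_le_of_le_one_right' (ENNReal.ofReal_le_one.2 (by linarith))
    calc c * volume (singSet f ε)
        ≤ c * (5 ^ 5 * volume (ball (0 : E3) 1) * ENNReal.ofReal κ ^ 4 *
            ∑' i, ENNReal.ofReal (r i)) := by
          gcongr
          exact volume_le_of_subset_iUnion_Pcyl (fun i => Ioo_subset_Icc_self (hr i)) hcov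
      _ = 5 ^ 5 * volume (ball (0 : E3) 1) * ENNReal.ofReal κ ^ 4 *
            (c * ∑' i, ENNReal.ofReal (r i)) := by ring
      _ ≤ 5 ^ 5 * volume (ball (0 : E3) 1) * ENNReal.ofReal κ ^ 4 *
            ((∫⁻ p, ENNReal.ofReal (f p)) + c) := by
          gcongr
          exact hsum.trans (add_le_add_right hκc _)
      _ = A * ENNReal.ofReal κ ^ 4 := by ring
  have hlim : Tendsto (fun κ : ℝ => A * ENNReal.ofReal κ ^ 4) (𝓝[>] 0) (𝓝 0) := by
    have := ENNReal.Tendsto.const_mul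
      (ENNReal.Tendsto.pow (n := 4) (ENNReal.continuous_ofReal.tendsto 0)) (Or.inr hA)
    simpa using this.mono_left nhdsWithin_le_nhds
  have hzero : c * volume (singSet f ε) = 0 :=
    le_antisymm (ge_of_tendsto hlim (eventually_of_mem (Ioc_mem_nhdsGT one_pos) hbound)) bot_le
  exact (mul_eq_zero.1 hzero).resolve_left hc0.ne'

lemma exists_isOpen_superset_setLIntegral_lt {X : Type*} [TopologicalSpace X]
    [TopologicalSpace.PseudoMetrizableSpace X] [MeasurableSpace X] [BorelSpace X]
    {μ : Measure X} {g : X → ℝ≥0∞} (hg : ∫⁻ x, g x ∂μ ≠ ∞) {s : Set X} (hs : μ s = 0)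
    {δ : ℝ≥0∞} (hδ : 0 < δ) : ∃ U ⊇ s, IsOpen U ∧ ∫⁻ x in U, g x ∂μ < δ := by
  have : IsFiniteMeasure (μ.withDensity g) := isFiniteMeasure_withDensity hg
  obtain ⟨U, hsU, hU, hlt⟩ :=
    s.exists_isOpen_lt_of_lt δ (by rwa [withDensity_absolutelyContinuous μ g hs])
  exact ⟨U, hsU, hU, by rwa [← withDensity_apply _ hU.measurableSet]⟩

theorem statement_16_general (f : E3 × ℝ → ℝ) (hf : Integrable f)
    (ε : ℝ) (hε : 0 < ε) :
    volume (singSet f ε) = 0 ∧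
      ∀ κ : ℝ, 0 < κ →
        ∃ (z : ℕ → E3 × ℝ) (r : ℕ → ℝ),
          (∀ i, r i ∈ Ioo (0 : ℝ) κ) ∧
          singSet f ε ⊆ ⋃ i, Pcyl (5 * r i) (z i) ∧
          (∑' i, ENNReal.ofReal (r i)) ≤ ENNReal.ofReal κ := by
  have hnull := volume_singSet_eq_zero hf hε
  refine ⟨hnull, fun κ hκ => ?_⟩
  obtain ⟨c, hc0, hc⟩ := exists_between (ENNReal.ofReal_pos.2 hε)
  have hcκ : 0 < c * ENNReal.ofReal (κ / 2) :=
    ENNReal.mul_pos hc0.ne' (ENNReal.ofReal_pos.2 (half_pos hκ)).ne'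
  obtain ⟨U, hsU, hU, hUf⟩ :=
    exists_isOpen_superset_setLIntegral_lt hf.lintegral_lt_top.ne hnull hcκ
  obtain ⟨z, r, hr, hcov, hsum⟩ := exists_Pcyl_cover_mul_tsum_le hc hκ hU hsU
  refine ⟨z, r, hr, hcov, (ENNReal.mul_le_mul_iff_right hc0.ne' (ne_top_of_lt hc)).1 ?_⟩
  calc c * ∑' i, ENNReal.ofReal (r i)
      ≤ c * ENNReal.ofReal (κ / 2) + c * ENNReal.ofReal (κ / 2) :=
        hsum.trans (add_le_add_left hUf.le _)
    _ = c * ENNReal.ofReal κ := by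
        rw [← mul_add, ← ENNReal.ofReal_add (half_pos hκ).le (half_pos hκ).le, add_halves]

/-- Covering argument for the singular set. If `f ≥ 0` is Lebesgue
integrable on `ℝ³×ℝ` and `ε > 0`, then `Σ` has Lebesgue measure zero, and for every
`κ > 0` there are countably many `z_i` and radii `r_i ∈ (0, κ)` with
`Σ ⊆ ⋃ i, P_{5 r_i}(z_i)` and `∑ r_i ≤ κ`; i.e. the one-dimensional parabolic Hausdorff
measure of `Σ` vanishes. -/
theorem statement_16 (f : E3 × ℝ → ℝ) (hf : Integrable f) (hnn : ∀ z, 0 ≤ f z)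
    (ε : ℝ) (hε : 0 < ε) :
    volume (singSet f ε) = 0 ∧
      ∀ κ : ℝ, 0 < κ →
        ∃ (z : ℕ → E3 × ℝ) (r : ℕ → ℝ),
          (∀ i, r i ∈ Ioo (0 : ℝ) κ) ∧
          singSet f ε ⊆ ⋃ i, Pcyl (5 * r i) (z i) ∧
          (∑' i, ENNReal.ofReal (r i)) ≤ ENNReal.ofReal κ :=
  statement_16_general f hf ε hε
end
end

section
/- (Maximum principle, Lemma 4.1, smooth periodic version.) Let a, b ∈ ℝ, c > 0 and T > 0. Let u : ℝ³×[0,T] → ℝ³ and Q : ℝ³×[0,T] → 𝒮₀ be smooth, ℤ³-periodic in the space variable, with ∑_α ∂_αu_α = 0, and satisfying ∂_tQ + u·∇Q − ωQ + Qω = ΔQ − f_LdG(Q) on ℝ³×(0,T], where ω := (∇u − (∇u)ᵀ)/2. Then for every (x,t) ∈ ℝ³×[0,T]: |Q(x,t)| ≤ max{ sup_{y∈ℝ³} |Q(y,0)| , √( max( b²/c² − 2a/c , 0) ) }. -/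
/-!
At a spatial maximum of `|Q|² = Σ Q_{αβ}²` the transport term `u·∇|Q|²/2` vanishes, the Laplacian
term `Q : ΔQ` is nonpositive, and the co-rotational terms cancel because `Q` is symmetric, so
`∂ₜ|Q|²/2 ≤ -Q : f_LdG(Q)`. For traceless `Q` one has `Q : f_LdG(Q) = a|Q|² - b tr(Q³) + c|Q|⁴`
with `|tr(Q³)| ≤ |Q|³`, which is `≥ 0` as soon as `|Q|² ≥ b²/c² - 2a/c`. Hence a maximum of
`|Q|² - εt` over a period cell times `[0, t]` that lies above the bound cannot occur at a positive
time, where its time derivative would be `≥ 0` yet `≤ -ε`; letting `ε → 0` gives the claim.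
-/

noncomputable section
open Matrix Set

/-- The integer translation vector associated with `k ∈ ℤ³`. -/
def intVec (k : Fin 3 → ℤ) : E3 := ∑ i, (k i : ℝ) • EuclideanSpace.single i (1 : ℝ)

open Filter Topology

section Calculus

variable {E : Type*} [NormedAddCommGroup E] [NormedSpace ℝ E]

theorem IsLocalMax.deriv_deriv_nonpos {f : ℝ → ℝ} {a : ℝ} (h : IsLocalMax f a)
    (hf : ContinuousAt f a) : deriv (deriv f) a ≤ 0 := by
  -- If `f'' a > 0`, then `a` is also a local minimum, so `f` is constant near `a`.
  by_contra! hpos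
  have hmin : IsLocalMin f a := isLocalMin_of_deriv_deriv_pos hpos h.deriv_eq_zero hf
  have hconst : f =ᶠ[𝓝 a] fun _ => f a := by
    filter_upwards [h, hmin] with x hx hx' using le_antisymm hx hx'
  have : deriv (deriv f) a = 0 := by simp [hconst.deriv.deriv_eq]
  linarith

theorem IsLocalMax.fderiv_fderiv_apply_nonpos {F : E → ℝ} {x₀ : E} (hF : ContDiff ℝ 2 F)
    (h : IsLocalMax F x₀) (v : E) : fderiv ℝ (fun y => fderiv ℝ F y v) x₀ v ≤ 0 := by
  let line : ℝ → E := fun s => x₀ + s • v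
  have hline : ∀ s, HasDerivAt line v s := fun s =>
    (((hasDerivAt_id s).smul_const v).const_add x₀).congr_deriv (one_smul ℝ v)
  have hline0 : line 0 = x₀ := by simp [line]
  have hDF : Differentiable ℝ (fun y => fderiv ℝ F y v) :=
    ((hF.fderiv_right le_rfl).clm_apply contDiff_const).differentiable one_ne_zero
  have hderiv : deriv (F ∘ line) = fun s => fderiv ℝ F (line s) v := funext fun s =>
    ((hF.differentiable two_ne_zero _).hasFDerivAt.comp_hasDerivAt s (hline s)).deriv
  have hderiv2 : deriv (deriv (F ∘ line)) 0 = fderiv ℝ (fun y => fderiv ℝ F y v) x₀ v := by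
    rw [hderiv, ← hline0]
    exact ((hDF _).hasFDerivAt.comp_hasDerivAt 0 (hline 0)).deriv
  rw [← hderiv2]
  refine IsLocalMax.deriv_deriv_nonpos ?_ ?_
  · exact (hline0 ▸ h).comp_continuous (hline 0).continuousAt
  · exact hF.continuous.continuousAt.comp (hline 0).continuousAt

variable {ι : Type*} [Fintype ι] {g : ι → E → ℝ} {x₀ : E}

theorem hasFDerivAt_sum_sq {g' : ι → E →L[ℝ] ℝ} (hg : ∀ i, HasFDerivAt (g i) (g' i) x₀) :
    HasFDerivAt (fun y => ∑ i, g i y ^ 2) (∑ i, (2 * g i x₀) • g' i) x₀ :=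
  HasFDerivAt.fun_sum fun i _ => by simpa using (hg i).pow 2

theorem IsLocalMax.sum_mul_fderiv_eq_zero (h : IsLocalMax (fun y => ∑ i, g i y ^ 2) x₀)
    (hg : ∀ i, DifferentiableAt ℝ (g i) x₀) (v : E) :
    ∑ i, g i x₀ * fderiv ℝ (g i) x₀ v = 0 := by
  have := congrArg (· v) (h.hasFDerivAt_eq_zero (hasFDerivAt_sum_sq fun i => (hg i).hasFDerivAt))
  simp only [FunLike.coe_sum, Finset.sum_apply, FunLike.coe_smul, Pi.smul_apply, smul_eq_mul,
    FunLike.coe_zero, Pi.zero_apply, mul_assoc, ← Finset.mul_sum] at this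
  linarith

theorem IsLocalMax.sum_mul_fderiv_fderiv_nonpos (h : IsLocalMax (fun y => ∑ i, g i y ^ 2) x₀)
    (hg : ∀ i, ContDiff ℝ 2 (g i)) (v : E) :
    ∑ i, g i x₀ * fderiv ℝ (fun y => fderiv ℝ (g i) y v) x₀ v ≤ 0 := by
  have hg1 : ∀ i y, DifferentiableAt ℝ (g i) y := fun i => (hg i).differentiable two_ne_zero
  have hDg : ∀ i, Differentiable ℝ (fun y => fderiv ℝ (g i) y v) := fun i =>
    (((hg i).fderiv_right le_rfl).clm_apply contDiff_const).differentiable one_ne_zero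
  have hfirst : (fun y => fderiv ℝ (fun z => ∑ i, g i z ^ 2) y v) =
      fun y => ∑ i, 2 * g i y * fderiv ℝ (g i) y v := funext fun y => by
    simp [(hasFDerivAt_sum_sq fun i => (hg1 i y).hasFDerivAt).fderiv, mul_assoc]
  have hsecond : HasFDerivAt (fun y => ∑ i, 2 * g i y * fderiv ℝ (g i) y v)
      (∑ i, ((2 * g i x₀) • fderiv ℝ (fun y => fderiv ℝ (g i) y v) x₀
        + (fderiv ℝ (g i) x₀ v) • (2 : ℝ) • fderiv ℝ (g i) x₀)) x₀ :=
    HasFDerivAt.fun_sum fun i _ =>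
      ((hg1 i x₀).hasFDerivAt.const_mul 2).mul (hDg i x₀).hasFDerivAt
  have hle := (IsLocalMax.fderiv_fderiv_apply_nonpos
    (ContDiff.sum fun i _ => (hg i).pow 2) h v)
  rw [hfirst, hsecond.fderiv] at hle
  simp only [FunLike.coe_sum, Finset.sum_apply, FunLike.coe_add, Pi.add_apply,
    FunLike.coe_smul, Pi.smul_apply, smul_eq_mul, Finset.sum_add_distrib] at hle
  have hsq : 0 ≤ ∑ i, fderiv ℝ (g i) x₀ v * (2 * fderiv ℝ (g i) x₀ v) :=
    Finset.sum_nonneg fun i _ => by nlinarith [sq_nonneg (fderiv ℝ (g i) x₀ v)]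
  have htwo : ∑ i, 2 * g i x₀ * fderiv ℝ (fun y => fderiv ℝ (g i) y v) x₀ v =
      2 * ∑ i, g i x₀ * fderiv ℝ (fun y => fderiv ℝ (g i) y v) x₀ v := by
    simp only [Finset.mul_sum, mul_assoc]
  linarith

theorem hasDerivAt_sum_sq {g : ι → ℝ → ℝ} {t : ℝ} (hg : ∀ i, DifferentiableAt ℝ (g i) t) :
    HasDerivAt (fun s => ∑ i, g i s ^ 2) (2 * ∑ i, g i t * deriv (g i) t) t := by
  refine (HasDerivAt.fun_sum (u := Finset.univ) fun i _ =>
    (hg i).hasDerivAt.fun_pow 2).congr_deriv ?_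
  simp only [Finset.mul_sum, Nat.cast_ofNat, Nat.add_one_sub_one, pow_one, mul_assoc]

theorem IsMaxOn.hasDerivAt_nonneg_of_Icc {f : ℝ → ℝ} {a b d : ℝ} (hab : a < b)
    (h : IsMaxOn f (Icc a b) b) (hf : HasDerivAt f d b) : 0 ≤ d := by
  have hcone : a - b ∈ posTangentConeAt (Icc a b) b :=
    mem_posTangentConeAt_of_segment_subset (by
      rw [add_sub_cancel, segment_symm, segment_eq_Icc hab.le])
  have := (h.localize.on_subset subset_rfl).hasFDerivWithinAt_nonpos
    hf.hasFDerivAt.hasFDerivWithinAt hcone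
  rw [ContinuousLinearMap.toSpanSingleton_apply, smul_eq_mul] at this
  nlinarith

end Calculus

section MatrixAlgebra

variable {n : Type*} [Fintype n]

theorem Matrix.sum_apply_mul_apply_eq_trace (A B : Matrix n n ℝ) :
    ∑ k : n × n, A k.1 k.2 * B k.1 k.2 = (Aᵀ * B).trace := by
  simp only [Fintype.sum_prod_type, trace, diag_apply, mul_apply, transpose_apply]
  exact Finset.sum_comm

theorem Matrix.IsSymm.trace_mul_self {A : Matrix n n ℝ} (hA : A.IsSymm) :
    (A * A).trace = ∑ k : n × n, A k.1 k.2 ^ 2 := by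
  simp only [sq, sum_apply_mul_apply_eq_trace, hA.eq]

theorem Matrix.IsSymm.sum_apply_mul_mul_left_eq_right {A : Matrix n n ℝ} (hA : A.IsSymm)
    (W : Matrix n n ℝ) :
    ∑ k : n × n, A k.1 k.2 * (W * A) k.1 k.2 = ∑ k : n × n, A k.1 k.2 * (A * W) k.1 k.2 := by
  rw [sum_apply_mul_apply_eq_trace, sum_apply_mul_apply_eq_trace, hA.eq, ← Matrix.mul_assoc,
    trace_mul_comm]

theorem Matrix.sum_sq_mul_apply_le (A B : Matrix n n ℝ) :
    ∑ k : n × n, (A * B) k.1 k.2 ^ 2 ≤ (∑ k : n × n, A k.1 k.2 ^ 2) * ∑ k : n × n, B k.1 k.2 ^ 2 :=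
  calc ∑ k : n × n, (A * B) k.1 k.2 ^ 2
      ≤ ∑ k : n × n, (∑ l, A k.1 l ^ 2) * ∑ l, B l k.2 ^ 2 :=
        Finset.sum_le_sum fun k _ => Finset.sum_mul_sq_le_sq_mul_sq _ _ _
    _ = (∑ k : n × n, A k.1 k.2 ^ 2) * ∑ k : n × n, B k.1 k.2 ^ 2 := by
        simp only [Fintype.sum_prod_type]
        rw [Finset.sum_comm (f := fun l j => B l j ^ 2), Finset.sum_mul_sum]

theorem Matrix.sq_sum_apply_mul_mul_self_le (A : Matrix n n ℝ) :
    (∑ k : n × n, A k.1 k.2 * (A * A) k.1 k.2) ^ 2 ≤ (∑ k : n × n, A k.1 k.2 ^ 2) ^ 3 := by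
  have hA : 0 ≤ ∑ k : n × n, A k.1 k.2 ^ 2 := Finset.sum_nonneg fun k _ => sq_nonneg _
  calc (∑ k : n × n, A k.1 k.2 * (A * A) k.1 k.2) ^ 2
      ≤ (∑ k : n × n, A k.1 k.2 ^ 2) * ∑ k : n × n, (A * A) k.1 k.2 ^ 2 :=
        Finset.sum_mul_sq_le_sq_mul_sq _ _ _
    _ ≤ (∑ k : n × n, A k.1 k.2 ^ 2) * ((∑ k : n × n, A k.1 k.2 ^ 2) *
        ∑ k : n × n, A k.1 k.2 ^ 2) := by gcongr; exact sum_sq_mul_apply_le A A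
    _ = (∑ k : n × n, A k.1 k.2 ^ 2) ^ 3 := by ring

end MatrixAlgebra

theorem mul_sub_mul_add_mul_sq_nonneg {a b c φ τ : ℝ} (hc : 0 < c) (hφ : 0 ≤ φ)
    (hlarge : b ^ 2 / c ^ 2 - 2 * a / c ≤ φ) (hτ : τ ^ 2 ≤ φ ^ 3) :
    0 ≤ a * φ - b * τ + c * φ ^ 2 := by
  obtain ⟨s, hs, rfl⟩ : ∃ s, 0 ≤ s ∧ φ = s ^ 2 := ⟨√φ, Real.sqrt_nonneg φ, (Real.sq_sqrt hφ).symm⟩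
  have hbs : |b| * s ≤ a + c * s ^ 2 := by
    have : b ^ 2 - 2 * a * c ≤ c ^ 2 * s ^ 2 := by
      have := mul_le_mul_of_nonneg_left hlarge (sq_nonneg c)
      field_simp at this
      linarith
    nlinarith [sq_nonneg (c * s - |b|), sq_abs b]
  have hτs : |τ| ≤ s ^ 3 := abs_le_of_sq_le_sq (by nlinarith) (by positivity)
  suffices b * τ ≤ a * s ^ 2 + c * (s ^ 2) ^ 2 by linarith
  calc b * τ ≤ |b| * |τ| := by rw [← abs_mul]; exact le_abs_self _
    _ ≤ |b| * s * s ^ 2 := by nlinarith [abs_nonneg b]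
    _ ≤ (a + c * s ^ 2) * s ^ 2 := by gcongr
    _ = a * s ^ 2 + c * (s ^ 2) ^ 2 := by ring

theorem sum_apply_mul_fLdG_nonneg {a b c : ℝ} (hc : 0 < c) {A : M3} (hA : A.IsSymm)
    (htr : A.trace = 0) (hlarge : b ^ 2 / c ^ 2 - 2 * a / c ≤ ∑ k : Fin 3 × Fin 3, A k.1 k.2 ^ 2) :
    0 ≤ ∑ k : Fin 3 × Fin 3, A k.1 k.2 * fLdG a b c A k.1 k.2 := by
  set φ := ∑ k : Fin 3 × Fin 3, A k.1 k.2 ^ 2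
  set τ := ∑ k : Fin 3 × Fin 3, A k.1 k.2 * (A * A) k.1 k.2
  have hone : ∑ k : Fin 3 × Fin 3, A k.1 k.2 * (1 : M3) k.1 k.2 = 0 := by
    rw [sum_apply_mul_apply_eq_trace, Matrix.mul_one, trace_transpose, htr]
  have hexpand : ∑ k : Fin 3 × Fin 3, A k.1 k.2 * fLdG a b c A k.1 k.2 =
      a * φ - b * τ + c * φ ^ 2 := by
    simp only [fLdG, hA.trace_mul_self, Matrix.add_apply, Matrix.sub_apply, Matrix.smul_apply,
      smul_eq_mul]
    rw [Finset.sum_congr rfl fun k _ => show A k.1 k.2 * (a * A k.1 k.2 - b * ((A * A) k.1 k.2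
        - φ / 3 * (1 : M3) k.1 k.2) + c * φ * A k.1 k.2) = a * A k.1 k.2 ^ 2
        - b * (A k.1 k.2 * (A * A) k.1 k.2) + b * φ / 3 * (A k.1 k.2 * (1 : M3) k.1 k.2)
        + c * φ * A k.1 k.2 ^ 2 by ring]
    simp only [Finset.sum_add_distrib, Finset.sum_sub_distrib, ← Finset.mul_sum, hone]
    ring
  rw [hexpand]
  exact mul_sub_mul_add_mul_sq_nonneg hc (Finset.sum_nonneg fun k _ => sq_nonneg _) hlarge
    (sq_sum_apply_mul_mul_self_le A)

section MaximumPrinciple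

variable {X : Type*} [TopologicalSpace X] {C : Set X} {φ : X × ℝ → ℝ} {T K : ℝ}

theorem le_add_mul_of_deriv_nonpos_at_max (hC : IsCompact C)
    (hred : ∀ x, ∃ y ∈ C, ∀ t, φ (x, t) = φ (y, t))
    (hφ : ContinuousOn φ (univ ×ˢ Icc 0 T)) (h0 : ∀ x, φ (x, 0) ≤ K)
    (hmax : ∀ x₀, ∀ t₀ ∈ Ioo 0 T, IsMaxOn (fun x => φ (x, t₀)) univ x₀ → K < φ (x₀, t₀) →
      ∃ d ≤ 0, HasDerivAt (fun t => φ (x₀, t)) d t₀)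
    {t ε : ℝ} (ht : t ∈ Ico 0 T) (hε : 0 < ε) (x : X) : φ (x, t) ≤ K + ε * t := by
  obtain ⟨y, hyC, -⟩ := hred x
  have hsub : C ×ˢ Icc 0 t ⊆ univ ×ˢ Icc 0 T :=
    prod_mono (subset_univ C) (Icc_subset_Icc le_rfl ht.2.le)
  obtain ⟨⟨x₀, t₀⟩, ⟨-, ht₀⟩, hmax₀⟩ := (hC.prod isCompact_Icc).exists_isMaxOn
    ⟨(y, t), hyC, right_mem_Icc.2 ht.1⟩
    ((hφ.mono hsub).sub (continuous_const.mul continuous_snd).continuousOn)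
  have hglobal : ∀ z, ∀ s ∈ Icc 0 t, φ (z, s) - ε * s ≤ φ (x₀, t₀) - ε * t₀ := by
    intro z s hs
    obtain ⟨w, hwC, hw⟩ := hred z
    rw [hw]
    exact hmax₀ (mk_mem_prod hwC hs)
  by_cases hK : φ (x₀, t₀) ≤ K
  · nlinarith [hglobal x t (right_mem_Icc.2 ht.1), ht₀.1]
  rw [not_le] at hK
  have ht₀pos : 0 < t₀ := ht₀.1.lt_of_ne fun h => by
    subst h
    linarith [h0 x₀]
  obtain ⟨d, hd, hderiv⟩ := hmax x₀ t₀ ⟨ht₀pos, ht₀.2.trans_lt ht.2⟩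
    (fun z _ => by simpa using hglobal z t₀ ht₀) hK
  have := IsMaxOn.hasDerivAt_nonneg_of_Icc ht₀pos (f := fun s => φ (x₀, s) - ε * s)
    (fun s hs => hglobal x₀ s ⟨hs.1, hs.2.trans ht₀.2⟩)
    (hderiv.sub ((hasDerivAt_id t₀).const_mul ε))
  linarith

theorem le_of_deriv_nonpos_at_max (hT : 0 < T) (hC : IsCompact C)
    (hred : ∀ x, ∃ y ∈ C, ∀ t, φ (x, t) = φ (y, t))
    (hφ : ContinuousOn φ (univ ×ˢ Icc 0 T)) (h0 : ∀ x, φ (x, 0) ≤ K)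
    (hmax : ∀ x₀, ∀ t₀ ∈ Ioo 0 T, IsMaxOn (fun x => φ (x, t₀)) univ x₀ → K < φ (x₀, t₀) →
      ∃ d ≤ 0, HasDerivAt (fun t => φ (x₀, t)) d t₀)
    (x : X) {t : ℝ} (ht : t ∈ Icc 0 T) : φ (x, t) ≤ K := by
  have hcont : ContinuousOn (fun s => φ (x, s)) (Icc 0 T) :=
    hφ.comp (continuous_const.prodMk continuous_id).continuousOn fun s hs => ⟨trivial, hs⟩
  have hIco : ∀ s ∈ Ico 0 T, φ (x, s) ≤ K := fun s hs => le_of_forall_pos_le_add fun δ hδ => by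
    have hε : 0 < δ / (s + 1) := div_pos hδ (by linarith [hs.1])
    have hδs : δ / (s + 1) * s ≤ δ := by
      rw [div_mul_eq_mul_div, div_le_iff₀ (by linarith [hs.1])]
      nlinarith
    linarith [le_add_mul_of_deriv_nonpos_at_max hC hred hφ h0 hmax hs hε x]
  exact ContinuousWithinAt.closure_le (by rwa [closure_Ico hT.ne])
    ((hcont t ht).mono Ico_subset_Icc_self) continuousWithinAt_const hIco

end MaximumPrinciple

theorem intVec_apply (k : Fin 3 → ℤ) (i : Fin 3) : intVec k i = k i := by
  simp [intVec, Pi.single_apply]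

theorem exists_norm_sub_intVec_le_one (x : E3) : ∃ k, ‖x - intVec k‖ ≤ 1 := by
  refine ⟨fun i => round (x i), ?_⟩
  have hcoord : ∀ i, ‖(x - intVec fun i => round (x i)) i‖ ^ 2 ≤ 1 / 4 := fun i => by
    rw [WithLp.ofLp_sub, Pi.sub_apply, intVec_apply, Real.norm_eq_abs, sq_abs]
    nlinarith [abs_sub_round (x i), abs_nonneg (x i - round (x i)), sq_abs (x i - round (x i))]
  rw [EuclideanSpace.norm_eq, Real.sqrt_le_one]
  calc ∑ i, ‖(x - intVec fun i => round (x i)) i‖ ^ 2 ≤ ∑ _i : Fin 3, (1 / 4 : ℝ) :=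
        Finset.sum_le_sum fun i _ => hcoord i
    _ ≤ 1 := by norm_num

theorem exists_mem_closedBall_eq_of_periodic {γ : Type*} {f : E3 → γ}
    (hf : ∀ (k : Fin 3 → ℤ) (x : E3), f (x + intVec k) = f x) (x : E3) :
    ∃ y ∈ Metric.closedBall (0 : E3) 1, f x = f y := by
  obtain ⟨k, hk⟩ := exists_norm_sub_intVec_le_one x
  refine ⟨x - intVec k, mem_closedBall_zero_iff.2 hk, ?_⟩
  rw [← hf k (x - intVec k), sub_add_cancel]

theorem le_ciSup_of_periodic {f : E3 → ℝ} (hf : Continuous f)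
    (hper : ∀ (k : Fin 3 → ℤ) (x : E3), f (x + intVec k) = f x) (x : E3) : f x ≤ ⨆ y, f y := by
  refine le_ciSup (((isCompact_closedBall (0 : E3) 1).bddAbove_image hf.continuousOn).mono ?_) x
  rintro _ ⟨y, rfl⟩
  obtain ⟨z, hz, hyz⟩ := exists_mem_closedBall_eq_of_periodic hper y
  exact ⟨z, hz, hyz.symm⟩

theorem sum_apply_mul_pdt_nonpos_of_isLocalMax {a b c : ℝ} (hc : 0 < c)
    {u : E3 × ℝ → Fin 3 → ℝ} {Q : E3 × ℝ → M3} {x₀ : E3} {t₀ : ℝ}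
    (hQ : ∀ α β y, ContDiffAt ℝ 2 (fun p => Q p α β) (y, t₀))
    (hsym : (Q (x₀, t₀)).IsSymm) (htr : (Q (x₀, t₀)).trace = 0)
    (heq : ∀ α β : Fin 3,
      pdt (fun q => Q q α β) (x₀, t₀) + (∑ γ, u (x₀, t₀) γ * pdx γ (fun q => Q q α β) (x₀, t₀))
          - (∑ γ, omg u (x₀, t₀) α γ * Q (x₀, t₀) γ β)
          + (∑ γ, Q (x₀, t₀) α γ * omg u (x₀, t₀) γ β)
        = lapx (fun q => Q q α β) (x₀, t₀) - fLdG a b c (Q (x₀, t₀)) α β)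
    (hmax : IsLocalMax (fun y => ∑ k : Fin 3 × Fin 3, Q (y, t₀) k.1 k.2 ^ 2) x₀)
    (hlarge : b ^ 2 / c ^ 2 - 2 * a / c ≤ ∑ k : Fin 3 × Fin 3, Q (x₀, t₀) k.1 k.2 ^ 2) :
    ∑ k : Fin 3 × Fin 3, Q (x₀, t₀) k.1 k.2 * pdt (fun q => Q q k.1 k.2) (x₀, t₀) ≤ 0 := by
  set p : E3 × ℝ := (x₀, t₀)
  have hslice : ∀ α β, ContDiff ℝ 2 (fun y => Q (y, t₀) α β) := fun α β =>
    contDiff_iff_contDiffAt.2 fun y => (hQ α β y).comp y (contDiffAt_id.prodMk contDiffAt_const)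
  have hgrad : ∀ γ, ∑ k : Fin 3 × Fin 3, Q p k.1 k.2 * pdx γ (fun q => Q q k.1 k.2) p = 0 :=
    fun γ => hmax.sum_mul_fderiv_eq_zero (g := fun (k : Fin 3 × Fin 3) y => Q (y, t₀) k.1 k.2)
      (fun k => (hslice _ _).differentiable two_ne_zero _) _
  have htransport : ∑ k : Fin 3 × Fin 3,
      Q p k.1 k.2 * ∑ γ, u p γ * pdx γ (fun q => Q q k.1 k.2) p = 0 := by
    simp only [Finset.mul_sum]
    rw [Finset.sum_comm]
    refine Finset.sum_eq_zero fun γ _ => ?_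
    simp only [mul_left_comm (Q p _ _) (u p γ), ← Finset.mul_sum, hgrad γ, mul_zero]
  have hlap : ∑ k : Fin 3 × Fin 3, Q p k.1 k.2 * lapx (fun q => Q q k.1 k.2) p ≤ 0 := by
    simp only [lapx, Finset.mul_sum]
    rw [Finset.sum_comm]
    exact Finset.sum_nonpos fun γ _ => hmax.sum_mul_fderiv_fderiv_nonpos
      (g := fun (k : Fin 3 × Fin 3) y => Q (y, t₀) k.1 k.2) (fun k => hslice _ _) _
  have hrot := hsym.sum_apply_mul_mul_left_eq_right (Matrix.of (omg u p))
  simp only [mul_apply, of_apply] at hrot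
  have hsum : ∑ k : Fin 3 × Fin 3, Q p k.1 k.2 * pdt (fun q => Q q k.1 k.2) p =
      ∑ k : Fin 3 × Fin 3, (Q p k.1 k.2 * lapx (fun q => Q q k.1 k.2) p
        - Q p k.1 k.2 * fLdG a b c (Q p) k.1 k.2
        - Q p k.1 k.2 * ∑ γ, u p γ * pdx γ (fun q => Q q k.1 k.2) p
        + Q p k.1 k.2 * ∑ γ, omg u p k.1 γ * Q p γ k.2
        - Q p k.1 k.2 * ∑ γ, Q p k.1 γ * omg u p γ k.2) :=
    Finset.sum_congr rfl fun k _ => by linear_combination Q p k.1 k.2 * heq k.1 k.2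
  simp only [Finset.sum_add_distrib, Finset.sum_sub_distrib] at hsum
  linarith [sum_apply_mul_fLdG_nonneg hc hsym htr hlarge]

theorem statement_17_general (a b : ℝ) (c T : ℝ) (hc : 0 < c) (hT : 0 < T)
    (u : E3 × ℝ → Fin 3 → ℝ) (Q : E3 × ℝ → M3)
    (hQ : ∀ γ δ : Fin 3, ContDiffOn ℝ (⊤ : ℕ∞) (fun p => Q p γ δ)
      ((univ : Set E3) ×ˢ Icc (0 : ℝ) T))
    (hQsym : ∀ p : E3 × ℝ, p.2 ∈ Icc (0 : ℝ) T → (Q p).IsSymm)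
    (hQtr : ∀ p : E3 × ℝ, p.2 ∈ Icc (0 : ℝ) T → (Q p).trace = 0)
    (hper_Q : ∀ (k : Fin 3 → ℤ) (x : E3) (t : ℝ), Q (x + intVec k, t) = Q (x, t))
    (heqQ : ∀ p : E3 × ℝ, 0 < p.2 → p.2 ≤ T → ∀ α β : Fin 3,
      pdt (fun q => Q q α β) p + (∑ γ, u p γ * pdx γ (fun q => Q q α β) p)
          - (∑ γ, omg u p α γ * Q p γ β) + (∑ γ, Q p α γ * omg u p γ β)
        = lapx (fun q => Q q α β) p - fLdG a b c (Q p) α β) :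
    ∀ (x : E3) (t : ℝ), t ∈ Icc (0 : ℝ) T →
      Real.sqrt ((Q (x, t) * Q (x, t)).trace)
        ≤ max (⨆ y : E3, Real.sqrt ((Q (y, 0) * Q (y, 0)).trace))
            (Real.sqrt (max (b ^ 2 / c ^ 2 - 2 * a / c) 0)) := by
  set φ : E3 × ℝ → ℝ := fun p => ∑ k : Fin 3 × Fin 3, Q p k.1 k.2 ^ 2
  set m := max (b ^ 2 / c ^ 2 - 2 * a / c) 0
  set M := max (⨆ y : E3, √((Q (y, 0) * Q (y, 0)).trace)) √m
  have hM : 0 ≤ M := (Real.sqrt_nonneg _).trans (le_max_right _ _)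
  have hmM : b ^ 2 / c ^ 2 - 2 * a / c ≤ M ^ 2 := (le_max_left _ 0).trans <|
    (Real.sqrt_le_left hM).1 (le_max_right _ _)
  have htrace : ∀ p : E3 × ℝ, p.2 ∈ Icc 0 T → (Q p * Q p).trace = φ p :=
    fun p hp => (hQsym p hp).trace_mul_self
  have hred : ∀ x, ∃ y ∈ Metric.closedBall (0 : E3) 1, ∀ t, φ (x, t) = φ (y, t) := fun x =>
    (exists_mem_closedBall_eq_of_periodic (f := fun x t => Q (x, t))
      (fun k x => funext (hper_Q k x)) x).imp fun y ⟨hy, hQy⟩ =>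
        ⟨hy, fun t => by simp only [φ, congrFun hQy t]⟩
  have hφ : ContinuousOn φ (univ ×ˢ Icc 0 T) :=
    continuousOn_finsetSum _ fun k _ => ((hQ k.1 k.2).continuousOn).pow 2
  have h0 : ∀ x, φ (x, 0) ≤ M ^ 2 := fun x => by
    have hQ0 : Continuous fun y => Q (y, 0) := continuous_matrix fun α β =>
      (hQ α β).continuousOn.comp_continuous (continuous_id.prodMk continuous_const)
        fun y => ⟨trivial, left_mem_Icc.2 hT.le⟩
    rw [← Real.sqrt_le_left hM, ← htrace (x, 0) (left_mem_Icc.2 hT.le)]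
    exact (le_ciSup_of_periodic (hQ0.matrix_mul hQ0).matrix_trace.sqrt
      (fun k y => by rw [hper_Q]) x).trans (le_max_left _ _)
  have hmax : ∀ x₀, ∀ t₀ ∈ Ioo 0 T, IsMaxOn (fun x => φ (x, t₀)) univ x₀ → M ^ 2 < φ (x₀, t₀) →
      ∃ d ≤ 0, HasDerivAt (fun t => φ (x₀, t)) d t₀ := fun x₀ t₀ ht₀ hmax₀ hlarge => by
    have hQ₂ : ∀ α β y, ContDiffAt ℝ 2 (fun p => Q p α β) (y, t₀) := fun α β y =>
      ((hQ α β).contDiffAt (prod_mem_nhds univ_mem (Icc_mem_nhds ht₀.1 ht₀.2))).of_le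
        (by norm_cast)
    have ht₀' : t₀ ∈ Icc 0 T := Ioo_subset_Icc_self ht₀
    refine ⟨_, mul_nonpos_of_nonneg_of_nonpos zero_le_two ?_, hasDerivAt_sum_sq fun k =>
      ((hQ₂ k.1 k.2 x₀).comp t₀ (contDiffAt_const.prodMk contDiffAt_id)).differentiableAt
        two_ne_zero⟩
    exact sum_apply_mul_pdt_nonpos_of_isLocalMax hc hQ₂ (hQsym _ ht₀') (hQtr _ ht₀')
      (heqQ _ ht₀.1 ht₀.2.le) (hmax₀.isLocalMax univ_mem) (hmM.trans hlarge.le)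
  intro x t ht
  rw [htrace (x, t) ht, ← Real.sqrt_sq hM]
  exact Real.sqrt_le_sqrt
    (le_of_deriv_nonpos_at_max hT (isCompact_closedBall 0 1) hred hφ h0 hmax x ht)

/-- Maximum principle, Lemma 4.1, smooth periodic version.
If `u, Q` are smooth on `ℝ³ × [0,T]`, `ℤ³`-periodic in space, with `div u = 0`, `Q` valued
in symmetric traceless matrices, and `Q` solves the co-rotational Q-tensor equation on
`ℝ³ × (0,T]`, then for `0 ≤ t ≤ T`:
`|Q(x,t)| ≤ max { sup_y |Q(y,0)| , √(max(b²/c² − 2a/c, 0)) }`, where `|Q| = √(tr Q²)`. -/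
theorem statement_17 (a b : ℝ) (c T : ℝ) (hc : 0 < c) (hT : 0 < T)
    (u : E3 × ℝ → Fin 3 → ℝ) (Q : E3 × ℝ → M3)
    (hu : ∀ i, ContDiffOn ℝ (⊤ : ℕ∞) (fun p => u p i) ((univ : Set E3) ×ˢ Icc (0 : ℝ) T))
    (hQ : ∀ γ δ : Fin 3, ContDiffOn ℝ (⊤ : ℕ∞) (fun p => Q p γ δ)
      ((univ : Set E3) ×ˢ Icc (0 : ℝ) T))
    (hQsym : ∀ p : E3 × ℝ, p.2 ∈ Icc (0 : ℝ) T → (Q p).IsSymm)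
    (hQtr : ∀ p : E3 × ℝ, p.2 ∈ Icc (0 : ℝ) T → (Q p).trace = 0)
    (hper_u : ∀ (k : Fin 3 → ℤ) (x : E3) (t : ℝ), u (x + intVec k, t) = u (x, t))
    (hper_Q : ∀ (k : Fin 3 → ℤ) (x : E3) (t : ℝ), Q (x + intVec k, t) = Q (x, t))
    (hdiv : ∀ p : E3 × ℝ, p.2 ∈ Icc (0 : ℝ) T → (∑ α, pdx α (fun q => u q α) p) = 0)
    (heqQ : ∀ p : E3 × ℝ, 0 < p.2 → p.2 ≤ T → ∀ α β : Fin 3,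
      pdt (fun q => Q q α β) p + (∑ γ, u p γ * pdx γ (fun q => Q q α β) p)
          - (∑ γ, omg u p α γ * Q p γ β) + (∑ γ, Q p α γ * omg u p γ β)
        = lapx (fun q => Q q α β) p - fLdG a b c (Q p) α β) :
    ∀ (x : E3) (t : ℝ), t ∈ Icc (0 : ℝ) T →
      Real.sqrt ((Q (x, t) * Q (x, t)).trace)
        ≤ max (⨆ y : E3, Real.sqrt ((Q (y, 0) * Q (y, 0)).trace))
            (Real.sqrt (max (b ^ 2 / c ^ 2 - 2 * a / c) 0)) :=
  statement_17_general a b c T hc hT u Q hQ hQsym hQtr hper_Q heqQ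
end
end
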